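/- arXiv:2203.11478 — 13 statements merged into one kernel-verified Lean document; each statement's English description precedes it below -/
import Mathlib

section
/- A semiring S is a semidomain (i.e., embeds as a subsemiring into an integral domain) if and only if the multiplication of S extends to its Grothendieck group G(S) (of the additive monoid) making G(S) an integral domain. -/
/-- A witness that the commutative semiring `S` embeds into an integral domain. -/
structure SemidomainWitness (S : Type) [CommSemiring S] : Type 1 where
  R : Type
  [commRing : CommRing R]
  [isDomain : IsDomain R]
  f : S →+* R
  inj : Function.Injective f

/-- A semidomain is a commutative semiring that embeds into an integral domain. -/
def IsSemidomain (S : Type) [CommSemiring S] : Prop :=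
  Nonempty (SemidomainWitness S)

/-- A witness that the multiplication of `S` extends to the Grothendieck group of `(S,+)`
turning it into an integral domain: an integral domain `R` together with an embedding of
semirings `f : S →+* R` (so the multiplication of `R` extends that of `S`) such that every
element of `R` is a formal difference `f a - f b` of elements of `S` (so `R` is the
Grothendieck group of `(S,+)`). -/
structure GrothendieckDomainWitness (S : Type) [CommSemiring S] : Type 1 where
  R : Type
  [commRing : CommRing R]
  [isDomain : IsDomain R]
  f : S →+* R
  inj : Function.Injective f
  surjDiff : ∀ r : R, ∃ a b : S, r = f a - f b

/-- The subring of formal differences of elements in the image of a semiring hom. -/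
def diffSubring {S R : Type} [CommSemiring S] [CommRing R] (f : S →+* R) : Subring R where
  carrier := {r | ∃ a b : S, r = f a - f b}
  zero_mem' := ⟨0, 0, by simp⟩
  one_mem' := ⟨1, 0, by simp⟩
  add_mem' := by
    rintro _ _ ⟨a, b, rfl⟩ ⟨c, d, rfl⟩
    exact ⟨a + c, b + d, by simp only [map_add, map_mul]; ring⟩
  neg_mem' := by
    rintro _ ⟨a, b, rfl⟩
    exact ⟨b, a, by ring⟩
  mul_mem' := by
    rintro _ _ ⟨a, b, rfl⟩ ⟨c, d, rfl⟩
    exact ⟨a * c + b * d, a * d + b * c, by simp only [map_add, map_mul]; ring⟩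

/-- A semiring `S` is a semidomain if and only if the multiplication of `S` extends to its
Grothendieck group `G(S)` making `G(S)` an integral domain. -/
theorem stmt0 (S : Type) [CommSemiring S] :
    IsSemidomain S ↔ Nonempty (GrothendieckDomainWitness S) := by
  constructor
  · rintro ⟨⟨R, f, inj⟩⟩
    refine ⟨⟨diffSubring f,
      (f.codRestrict (diffSubring f).toSubsemiring fun s => ⟨s, 0, by simp⟩ : S →+* diffSubring f),
      ?_, ?_⟩⟩
    · intro x y h
      apply inj
      exact congrArg Subtype.val h
    · rintro ⟨r, a, b, rfl⟩
      exact ⟨a, b, Subtype.ext rfl⟩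
  · rintro ⟨⟨R, f, inj, _⟩⟩
    exact ⟨⟨R, f, inj⟩⟩
end

section
/- The semiring S = {(0,0)} ∪ (ℕ≥1 × ℕ≥1), with componentwise addition and multiplication on ℕ₀ × ℕ₀, is not a semidomain: it cannot be embedded as a subsemiring into any integral domain. -/
/-- The semiring `S = {(0,0)} ∪ (ℕ≥1 × ℕ≥1)`, a subsemiring of `ℕ × ℕ` with componentwise
addition and multiplication. -/
def T1 : Subsemiring (ℕ × ℕ) where
  carrier := {p : ℕ × ℕ | p = 0 ∨ (1 ≤ p.1 ∧ 1 ≤ p.2)}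
  zero_mem' := Or.inl rfl
  one_mem' := Or.inr ⟨le_refl 1, le_refl 1⟩
  add_mem' := by
    intro a b h h'
    simp only [Set.mem_setOf_eq, Prod.ext_iff, Prod.fst_add, Prod.snd_add, Prod.fst_zero,
      Prod.snd_zero] at *
    omega
  mul_mem' := by
    intro a b h h'
    simp only [Set.mem_setOf_eq, Prod.ext_iff, Prod.fst_mul, Prod.snd_mul, Prod.fst_zero,
      Prod.snd_zero] at *
    rcases h with ⟨h1, h2⟩ | ⟨h1, h2⟩
    · left; simp [h1, h2]
    · rcases h' with ⟨h1', h2'⟩ | ⟨h1', h2'⟩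
      · left; simp [h1', h2']
      · right
        exact ⟨Nat.one_le_iff_ne_zero.2 (Nat.mul_ne_zero (by omega) (by omega)),
          Nat.one_le_iff_ne_zero.2 (Nat.mul_ne_zero (by omega) (by omega))⟩

/-- The semiring `{(0,0)} ∪ (ℕ≥1 × ℕ≥1)` is not a semidomain: it cannot be embedded as a
subsemiring into any integral domain. -/
theorem stmt1 : ¬ IsSemidomain T1 := by
  rintro ⟨w⟩
  letI := w.commRing
  letI := w.isDomain
  set x : T1 := ⟨(1,2), Or.inr ⟨le_refl 1, by norm_num⟩⟩ with hx
  set y : T1 := ⟨(2,1), Or.inr ⟨by norm_num, le_refl 1⟩⟩ with hy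
  have hxy : x + y = 3 := by
    apply Subtype.ext
    show ((1,2) : ℕ × ℕ) + (2,1) = ((3 : T1) : ℕ × ℕ)
    have : ((3 : T1) : ℕ × ℕ) = 3 := by push_cast; rfl
    rw [this]; decide
  have hmul : x * y = 2 := by
    apply Subtype.ext
    show ((1,2) : ℕ × ℕ) * (2,1) = ((2 : T1) : ℕ × ℕ)
    have : ((2 : T1) : ℕ × ℕ) = 2 := by push_cast; rfl
    rw [this]; decide
  set a := w.f x with ha
  set b := w.f y with hb
  have h1 : a + b = 3 := by rw [ha, hb, ← map_add, hxy, map_ofNat]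
  have h2 : a * b = 2 := by rw [ha, hb, ← map_mul, hmul, map_ofNat]
  have key : (a - 1) * (a - 2) = 0 := by linear_combination a * h1 - h2
  rcases mul_eq_zero.mp key with h | h
  · have haa : a = 1 := by linear_combination h
    have : x = 1 := w.inj (by rw [← ha, haa, map_one])
    have := congrArg Subtype.val this
    simp only [hx] at this
    have h1' : ((1 : T1) : ℕ × ℕ) = 1 := by push_cast; rfl
    rw [h1'] at this
    exact absurd this (by decide)
  · have haa : a = 2 := by linear_combination h
    have : x = 2 := w.inj (by rw [← ha, haa, map_ofNat])
    have := congrArg Subtype.val this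
    simp only [hx] at this
    have h2' : ((2 : T1) : ℕ × ℕ) = 2 := by push_cast; rfl
    rw [h2'] at this
    exact absurd this (by decide)
end

section
/- Every subsemiring of ℚ that contains a negative rational number is a subring of ℚ (hence an integral domain); consequently every semidomain contained in ℚ is either a positive semiring (contained in ℚ≥0) or an integral domain. -/
lemma neg_one_mem_aux (T : Subsemiring ℚ) (q : ℚ) (hq : q ∈ T) (hneg : q < 0) :
    (-1 : ℚ) ∈ T := by
  have hden : ((q.den : ℚ)) ∈ T := natCast_mem T q.den
  have hnum : ((q.num : ℚ)) ∈ T := by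
    have : (q.num : ℚ) = (q.den : ℚ) * q := by
      rw [mul_comm, Rat.mul_den_eq_num]
    rw [this]
    exact T.mul_mem hden hq
  have hnumneg : q.num < 0 := Rat.num_neg.mpr hneg
  set m : ℕ := (-q.num - 1).toNat with hm
  have hmval : (m : ℤ) = -q.num - 1 := Int.toNat_of_nonneg (by omega)
  have : (-1 : ℚ) = (q.num : ℚ) + (m : ℚ) := by
    have h2 : ((m : ℤ) : ℚ) = ((-q.num - 1 : ℤ) : ℚ) := by exact_mod_cast hmval
    push_cast at h2 ⊢
    rw [h2]; ring
  rw [this]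
  exact T.add_mem hnum (natCast_mem T m)

lemma subring_of_neg (T : Subsemiring ℚ) (h : ∃ q ∈ T, q < 0) :
    ∃ R : Subring ℚ, (R : Set ℚ) = (T : Set ℚ) := by
  obtain ⟨q, hq, hneg⟩ := h
  have hneg1 : (-1 : ℚ) ∈ T := neg_one_mem_aux T q hq hneg
  refine ⟨{ T with neg_mem' := ?_ }, rfl⟩
  intro x hx
  have : -x = -1 * x := by ring
  rw [this]
  exact T.mul_mem hneg1 hx

/-- Every subsemiring of `ℚ` that contains a negative rational number is (the underlying set of)
a subring of `ℚ`; consequently every subsemiring of `ℚ` is either a positive semiring (consists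
of nonnegative numbers) or is a subring of `ℚ`, hence an integral domain. -/
theorem stmt2 :
    (∀ T : Subsemiring ℚ, (∃ q ∈ T, q < 0) →
      ∃ R : Subring ℚ, (R : Set ℚ) = (T : Set ℚ)) ∧
    (∀ T : Subsemiring ℚ,
      (∀ q ∈ T, 0 ≤ q) ∨ ∃ R : Subring ℚ, (R : Set ℚ) = (T : Set ℚ)) := by
  refine ⟨subring_of_neg, fun T => ?_⟩
  by_cases h : ∀ q ∈ T, 0 ≤ q
  · exact Or.inl h
  · push_neg at h
    exact Or.inr (subring_of_neg T h)
end

section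
/- Let S be a semidomain. The units of the Laurent polynomial semidomain S[x^{±1}] are exactly the elements u·x^n with u a unit of S and n an integer. -/
open Polynomial

/-! Embed `S` into a domain `R`. Over `R`, a unit of `R[T;T⁻¹]` times a suitable power of `T`
is a polynomial dividing a power of the prime `X`, hence a unit times a monomial. Since `S → R`
is injective, the image of `f` having a single monomial forces `f` itself to be a monomial
`c Tⁿ`, and evaluating at `T = 1` shows that `c` is a unit of `S`. -/

namespace LaurentPolynomial

theorem isUnit_C_mul_T_iff {R : Type*} [CommSemiring R] (a : R) (n : ℤ) :
    IsUnit (C a * T n : R[T;T⁻¹]) ↔ IsUnit a := by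
  refine ⟨fun h => ?_, fun ha => (ha.map C).mul (isUnit_T n)⟩
  simpa using h.map (eval₂ (RingHom.id R) 1)

theorem exists_C_mul_T_of_isUnit {R : Type*} [CommRing R] [IsDomain R] {f : R[T;T⁻¹]}
    (hf : IsUnit f) : ∃ (a : R) (n : ℤ), IsUnit a ∧ f = C a * T n := by
  obtain ⟨g, hfg⟩ := isUnit_iff_exists_inv.mp hf
  obtain ⟨n, p, hp⟩ := f.exists_T_pow
  obtain ⟨m, q, hq⟩ := g.exists_T_pow
  have hpq : p * q = X ^ (n + m) := by
    apply Polynomial.toLaurent_injective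
    rw [map_mul, hp, hq, toLaurent_X_pow, mul_mul_mul_comm, hfg, one_mul, ← T_add]
    norm_cast
  obtain ⟨i, -, v, hv⟩ := (dvd_prime_pow Polynomial.prime_X _).mp (Dvd.intro q hpq)
  obtain ⟨a, ha, hva⟩ := Polynomial.isUnit_iff.mp (v⁻¹).isUnit
  have hp' : p = X ^ i * Polynomial.C a := by rw [← hv, hva, Units.mul_inv_cancel_right]
  refine ⟨a, i - n, ha, ?_⟩
  calc f = toLaurent p * T (-n) := by rw [hp, mul_T_assoc, add_neg_cancel, T_zero, mul_one]
    _ = C a * T (i - n) := by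
      rw [hp', map_mul, toLaurent_X_pow, Polynomial.toLaurent_C, mul_comm (T i), mul_T_assoc,
        sub_eq_add_neg]

theorem eq_C_mul_T_of_mapRingHom_eq {R S : Type*} [Semiring R] [Semiring S] {φ : R →+* S}
    (hφ : Function.Injective φ) {f : R[T;T⁻¹]} {b : S} {n : ℤ}
    (h : AddMonoidAlgebra.mapRingHom ℤ φ f = C b * T n) : f = C (f.coeff n) * T n := by
  classical
  ext k
  rw [← single_eq_C_mul_T, AddMonoidAlgebra.coeff_single, Finsupp.single_apply]
  split_ifs with hk
  · rw [hk]
  · apply hφ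
    simpa [← single_eq_C_mul_T, Finsupp.single_apply, Ne.symm hk] using congr($h |>.coeff k)

end LaurentPolynomial

open LaurentPolynomial

/-- For a semidomain `S`, the units of the Laurent polynomial semidomain `S[x^{±1}]` are exactly
the elements `u·xⁿ` with `u` a unit of `S` and `n ∈ ℤ`. -/
theorem stmt4 (S : Type) [CommSemiring S] (hS : IsSemidomain S) (f : LaurentPolynomial S) :
    IsUnit f ↔ ∃ (u : S) (n : ℤ), IsUnit u ∧ f = LaurentPolynomial.C u * LaurentPolynomial.T n := by
  refine ⟨fun hf => ?_, fun ⟨u, n, hu, hf⟩ => hf ▸ (isUnit_C_mul_T_iff u n).mpr hu⟩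
  obtain ⟨⟨R, φ, hφ⟩⟩ := hS
  obtain ⟨_, n, -, hφf⟩ :=
    exists_C_mul_T_of_isUnit (hf.map (AddMonoidAlgebra.mapRingHom ℤ φ))
  have hfn := eq_C_mul_T_of_mapRingHom_eq hφ hφf
  exact ⟨f.coeff n, n, (isUnit_C_mul_T_iff _ n).mp (hfn ▸ hf), hfn⟩
end

section
/- Let S be a semidomain. If S[x] is atomic (every nonzero nonunit of S[x] is a product of irreducibles), then the Laurent polynomial semidomain S[x^{±1}] is atomic. -/
open Polynomial

/-- A commutative monoid with zero is atomic if every nonzero nonunit is a finite product of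
irreducible elements. -/
def Atomic (M : Type) [CommMonoidWithZero M] : Prop :=
  ∀ a : M, a ≠ 0 → ¬ IsUnit a → ∃ l : Multiset M, (∀ b ∈ l, Irreducible b) ∧ l.prod = a

/-! Every Laurent polynomial is a unit `T (-n)` times a polynomial, so a
factorization in `S[x]` becomes one in `S[x^{±1}]` once we know that each irreducible `p` of
`S[x]` stays irreducible or becomes a unit. If `p = a * b` in `S[x^{±1}]`, clearing denominators
gives `p * x ^ n = q * r` in `S[x]`; since `x` is prime and `S[x]` is cancellative, the powers of
`x` can be peeled off `q` and `r` one at a time, leaving a factorization of `p` itself. -/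

namespace IsSemidomain

variable {S : Type} [CommSemiring S]

theorem isDomain (hS : IsSemidomain S) : IsDomain S :=
  let ⟨W⟩ := hS
  letI := W.commRing
  letI := W.isDomain
  W.inj.isDomain W.f

theorem isCancelAdd (hS : IsSemidomain S) : IsCancelAdd S :=
  let ⟨W⟩ := hS
  letI := W.commRing
  haveI : IsLeftCancelAdd S :=
    ⟨fun a b c h => W.inj <| add_left_cancel (by simpa only [map_add] using congrArg W.f h)⟩
  AddCommMagma.IsLeftCancelAdd.toIsCancelAdd S

end IsSemidomain

theorem Polynomial.prime_X_of_noZeroDivisors {R : Type*} [CommSemiring R] [NoZeroDivisors R]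
    [Nontrivial R] : Prime (X : R[X]) := by
  refine ⟨X_ne_zero, not_isUnit_X, fun q r hqr => ?_⟩
  simpa only [X_dvd_iff, mul_coeff_zero, mul_eq_zero] using hqr

section Localization

variable {M N : Type*} [CommMonoidWithZero M] [IsLeftCancelMulZero M] [CommMonoid N]
  {x p : M} (φ : M →* N)

theorem isUnit_or_isUnit_of_mul_pow_eq_mul (hx : Prime x) (hφx : IsUnit (φ x))
    (hp : Irreducible p) {n : ℕ} {q r : M} (h : p * x ^ n = q * r) :
    IsUnit (φ q) ∨ IsUnit (φ r) := by
  induction n generalizing q r with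
  | zero => exact (hp.isUnit_or_isUnit (by simpa using h)).imp (·.map φ) (·.map φ)
  | succ n ih =>
    have of_dvd_left : ∀ {q r : M}, p * x ^ (n + 1) = q * r → x ∣ q →
        IsUnit (φ q) ∨ IsUnit (φ r) := by
      rintro q r h ⟨q₁, rfl⟩
      have : p * x ^ n = q₁ * r :=
        mul_left_cancel₀ hx.ne_zero (by rw [← mul_assoc x q₁, ← h, pow_succ', mul_left_comm])
      exact (ih this).imp_left fun hq => by simpa only [map_mul] using hφx.mul hq
    rcases hx.dvd_or_dvd (h ▸ dvd_mul_of_dvd_right (dvd_pow_self x n.succ_ne_zero) p) with hq | hr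
    · exact of_dvd_left h hq
    · exact (of_dvd_left (h.trans (mul_comm q r)) hr).symm

theorem isUnit_or_irreducible_map (hx : Prime x) (hφx : IsUnit (φ x))
    (hφ : Function.Injective φ) (hsurj : ∀ a : N, ∃ (n : ℕ) (q : M), φ q = a * φ x ^ n)
    (hp : Irreducible p) : IsUnit (φ p) ∨ Irreducible (φ p) := by
  refine or_iff_not_imp_left.mpr fun hu => ⟨hu, fun a b hab => ?_⟩
  obtain ⟨m, q, hq⟩ := hsurj a
  obtain ⟨k, r, hr⟩ := hsurj b
  have : p * x ^ (m + k) = q * r := hφ <| by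
    rw [map_mul, map_mul, map_pow, hq, hr, hab, pow_add]
    ac_rfl
  refine (isUnit_or_isUnit_of_mul_pow_eq_mul φ hx hφx hp this).imp ?_ ?_
  · exact fun h => isUnit_of_mul_isUnit_left (hq ▸ h)
  · exact fun h => isUnit_of_mul_isUnit_left (hr ▸ h)

end Localization

theorem exists_prod_eq_of_associated_prod {N : Type*} [CommMonoid N] {a : N} (ha : ¬IsUnit a)
    {m : Multiset N} (hm : ∀ b ∈ m, IsUnit b ∨ Irreducible b) (ham : Associated m.prod a) :
    ∃ l : Multiset N, (∀ b ∈ l, Irreducible b) ∧ l.prod = a := by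
  classical
  set l := m.filter Irreducible
  have hunits : IsUnit (m.filter (¬Irreducible ·)).prod :=
    Multiset.prod_induction _ _ (fun _ _ => IsUnit.mul) isUnit_one fun b hb =>
      (hm b (Multiset.mem_filter.mp hb).1).resolve_right (Multiset.mem_filter.mp hb).2
  have hl : Associated l.prod a := by
    rw [← Multiset.prod_filter_mul_prod_filter_not (s := m) Irreducible] at ham
    exact (associated_mul_isUnit_left_iff hunits).mp ham
  obtain ⟨c, hc⟩ := Multiset.exists_mem_of_ne_zero fun h0 : l = 0 =>
    ha (hl.isUnit_iff.mp (by simp [h0]))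
  obtain ⟨l₁, hcl⟩ := Multiset.exists_cons_of_mem hc
  obtain ⟨u, hu⟩ := hl
  refine ⟨(c * u) ::ₘ l₁, ?_, ?_⟩
  · intro b hb
    rcases Multiset.mem_cons.mp hb with rfl | hb
    · exact (irreducible_mul_units u).mpr (Multiset.of_mem_filter hc)
    · exact Multiset.of_mem_filter (hcl ▸ Multiset.mem_cons_of_mem hb)
  · rw [← hu, hcl, Multiset.prod_cons, Multiset.prod_cons]
    ac_rfl

theorem Atomic.of_monoidWithZeroHom {M N : Type} [CommMonoidWithZero M] [CommMonoidWithZero N]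
    (hM : Atomic M) (φ : M →*₀ N) (hφ : ∀ p, Irreducible p → IsUnit (φ p) ∨ Irreducible (φ p))
    (hsurj : ∀ a : N, ∃ p : M, Associated (φ p) a) : Atomic N := by
  intro a ha0 ha
  obtain ⟨p, hpa⟩ := hsurj a
  have hp0 : p ≠ 0 := by rintro rfl; exact ha0 (by simpa using hpa.symm)
  obtain ⟨l, hl, rfl⟩ := hM p hp0 fun hp => ha (hpa.isUnit_iff.mp (hp.map φ))
  refine exists_prod_eq_of_associated_prod ha (m := l.map φ) ?_ (map_multiset_prod φ l ▸ hpa)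
  simpa only [Multiset.forall_mem_map_iff] using fun b hb => hφ b (hl b hb)

open LaurentPolynomial

/-- For a semidomain `S`: if the polynomial semidomain `S[x]` is atomic, then the Laurent
polynomial semidomain `S[x^{±1}]` is atomic. -/
theorem stmt6 (S : Type) [CommSemiring S] (hS : IsSemidomain S)
    (h : Atomic (Polynomial S)) : Atomic (LaurentPolynomial S) := by
  have := hS.isDomain
  have := hS.isCancelAdd
  have hX : IsUnit (toLaurent (X : S[X])) := by simpa using isUnit_T 1
  have clear_denominators (f : S[T;T⁻¹]) :
      ∃ (n : ℕ) (q : S[X]), toLaurent q = f * toLaurent X ^ n := by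
    simpa [toLaurent_X_pow] using exists_T_pow f
  refine h.of_monoidWithZeroHom toLaurent.toMonoidWithZeroHom
    (fun p hp => isUnit_or_irreducible_map toLaurent.toMonoidHom prime_X_of_noZeroDivisors hX
      toLaurent_injective clear_denominators hp) fun f => ?_
  obtain ⟨n, q, hq⟩ := clear_denominators f
  exact ⟨q, hq ▸ (associated_mul_isUnit_left_iff (hX.pow n)).mpr (Associated.refl f)⟩
end

section
/- Let S be a semidomain. If S satisfies the ascending chain condition on principal ideals of its multiplicative monoid, then so does the polynomial semidomain S[x]. -/
open Polynomial

/-- A commutative monoid with zero satisfies the ascending chain condition on principal ideals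
(of its monoid of nonzero elements) if every ascending chain of principal ideals
`b₀M ⊆ b₁M ⊆ ⋯` with each `bₙ` nonzero stabilizes. -/
def SatisfiesACCP (M : Type) [CommMonoidWithZero M] : Prop :=
  ∀ f : ℕ → M, (∀ n, f n ≠ 0) → (∀ n, f (n + 1) ∣ f n) →
    ∃ N, ∀ n, N ≤ n → f N ∣ f n

/-- For a semidomain `S`: if `S` satisfies ACCP, then the polynomial semidomain `S[x]`
satisfies ACCP. -/
theorem stmt9 (S : Type) [CommSemiring S] (hS : IsSemidomain S)
    (h : SatisfiesACCP S) : SatisfiesACCP (Polynomial S) := by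
  obtain ⟨⟨R, φ, hφ⟩⟩ := hS
  intro f hf0 hdvd
  have hmapinj : Function.Injective (Polynomial.map φ) := Polynomial.map_injective φ hφ
  have hmap0 : ∀ p : Polynomial S, p ≠ 0 → p.map φ ≠ 0 := by
    intro p hp hc
    exact hp (hmapinj (by simpa using hc))
  have hdeg : ∀ p : Polynomial S, (p.map φ).natDegree = p.natDegree :=
    fun p => Polynomial.natDegree_map_eq_of_injective hφ p
  -- degrees add along the divisibility chain
  have hadd : ∀ n, ∃ g : Polynomial S, f n = f (n + 1) * g ∧
      (f n).natDegree = (f (n + 1)).natDegree + g.natDegree := by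
    intro n
    obtain ⟨g, hg⟩ := hdvd n
    refine ⟨g, hg, ?_⟩
    have hgne : g ≠ 0 := by
      rintro rfl
      exact hf0 n (by simpa using hg)
    have hm : (f n).map φ = (f (n + 1)).map φ * g.map φ := by
      rw [hg, Polynomial.map_mul]
    have := Polynomial.natDegree_mul (hmap0 _ (hf0 (n + 1))) (hmap0 g hgne)
    rw [← hm, hdeg, hdeg, hdeg] at this
    exact this
  have hanti : Antitone fun n => (f n).natDegree := by
    apply antitone_nat_of_succ_le
    intro n
    obtain ⟨g, _, hdn⟩ := hadd n
    omega
  -- the degree sequence stabilizes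
  obtain ⟨N0, hN0⟩ : ∃ N0, ∀ n, N0 ≤ n → (f n).natDegree = (f N0).natDegree := by
    have hne : (Set.range fun n => (f n).natDegree).Nonempty := Set.range_nonempty _
    obtain ⟨N0, hN0⟩ := Nat.sInf_mem hne
    refine ⟨N0, fun n hn => ?_⟩
    have h1 : (f n).natDegree ≤ (f N0).natDegree := hanti hn
    have h2 : (f N0).natDegree ≤ (f n).natDegree :=
      le_trans (le_of_eq hN0) (Nat.sInf_le ⟨n, rfl⟩)
    omega
  -- once degrees stabilize, successive quotients are constants
  have hstep : ∀ n, N0 ≤ n → ∃ c : S, f n = f (n + 1) * Polynomial.C c := by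
    intro n hn
    obtain ⟨g, hg, hdn⟩ := hadd n
    have e1 : (f n).natDegree = (f N0).natDegree := hN0 n hn
    have e2 : (f (n + 1)).natDegree = (f N0).natDegree := hN0 (n + 1) (by omega)
    have hg0 : g.natDegree = 0 := by omega
    obtain ⟨c, rfl⟩ := Polynomial.natDegree_eq_zero.mp hg0
    exact ⟨c, hg⟩
  -- leading coefficient relation when degrees are equal
  have hlead : ∀ n c, N0 ≤ n → f n = f (n + 1) * Polynomial.C c →
      (f n).leadingCoeff = (f (n + 1)).leadingCoeff * c := by
    intro n c hn hc
    have e1 : (f n).natDegree = (f (n + 1)).natDegree := by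
      rw [hN0 n hn, hN0 (n + 1) (by omega)]
    unfold Polynomial.leadingCoeff
    rw [e1, hc, Polynomial.coeff_mul_C]
  -- apply ACCP in S to the leading coefficients
  obtain ⟨N1, hN1⟩ := h (fun n => (f (N0 + n)).leadingCoeff)
    (fun n => Polynomial.leadingCoeff_ne_zero.mpr (hf0 _))
    (by
      intro n
      obtain ⟨c, hc⟩ := hstep (N0 + n) (by omega)
      refine ⟨c, ?_⟩
      show (f (N0 + n)).leadingCoeff = (f (N0 + (n + 1))).leadingCoeff * c
      rw [← Nat.add_assoc]
      exact hlead (N0 + n) c (by omega) hc)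
  refine ⟨N0 + N1, fun n hn => ?_⟩
  -- f (N0+N1) = f n * C c for some c
  have key : ∀ m, N0 + N1 ≤ m → ∃ c : S, f (N0 + N1) = f m * Polynomial.C c := by
    intro m hm
    induction m with
    | zero =>
      refine ⟨1, ?_⟩
      have h0 : N0 + N1 = 0 := by omega
      rw [h0]
      simp
    | succ k ih =>
      rcases Nat.lt_or_ge (N0 + N1) (k + 1) with hlt | hge
      · obtain ⟨c, hc⟩ := ih (by omega)
        obtain ⟨c', hc'⟩ := hstep k (by omega)
        exact ⟨c' * c, by rw [hc, hc', Polynomial.C_mul]; ring⟩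
      · have : N0 + N1 = k + 1 := by omega
        exact ⟨1, by rw [this]; simp⟩
  obtain ⟨c, hc⟩ := key n hn
  -- leading coefficient relation
  have hleadc : (f (N0 + N1)).leadingCoeff = (f n).leadingCoeff * c := by
    have e1 : (f (N0 + N1)).natDegree = (f n).natDegree := by
      rw [hN0 _ (by omega), hN0 n (by omega)]
    unfold Polynomial.leadingCoeff
    rw [e1, hc, Polynomial.coeff_mul_C]
  -- ACCP gives the reverse divisibility on leading coefficients
  obtain ⟨e, he⟩ : (f (N0 + N1)).leadingCoeff ∣ (f n).leadingCoeff := by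
    have := hN1 (n - N0) (by omega)
    rwa [Nat.add_sub_cancel' (by omega : N0 ≤ n)] at this
  -- deduce that e * c = 1
  have hec : e * c = 1 := by
    have hL : (f (N0 + N1)).leadingCoeff * (e * c) = (f (N0 + N1)).leadingCoeff * 1 := by
      rw [mul_one]
      calc (f (N0 + N1)).leadingCoeff * (e * c)
          = ((f (N0 + N1)).leadingCoeff * e) * c := by ring
        _ = (f n).leadingCoeff * c := by rw [← he]
        _ = (f (N0 + N1)).leadingCoeff := hleadc.symm
    have hLne : φ ((f (N0 + N1)).leadingCoeff) ≠ 0 := by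
      intro hz
      exact Polynomial.leadingCoeff_ne_zero.mpr (hf0 _)
        (hφ (hz.trans (map_zero φ).symm))
    apply hφ
    have : φ ((f (N0 + N1)).leadingCoeff) * φ (e * c)
        = φ ((f (N0 + N1)).leadingCoeff) * φ 1 := by
      rw [← map_mul, ← map_mul, hL]
    simpa using mul_left_cancel₀ hLne this
  exact ⟨Polynomial.C e, by rw [hc, mul_assoc, ← Polynomial.C_mul,
    mul_comm c e, hec, Polynomial.C_1, mul_one]⟩
end

section
/- For a rational number r with 0 < r < 1 and numerator at least 2, the additive monoid S_r = ⟨r^n : n ∈ ℕ₀⟩ generated by the powers of r is an MCD-monoid: every finite nonempty subset of S_r admits a maximal common (additive) divisor. -/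
/-!
Write `r = a / b` in lowest terms and choose `N` with `T ⊆ b⁻ᴺ ℤ`. The common divisors of `T`
lying in `b⁻ᴺ ℤ` are bounded by any element of `T`, so there is a largest one, `d`. It is a
maximal common divisor: a nonzero common divisor `e` of `{t - d}` is at least some `r ^ m`.
If `m ≤ N`, then `d + r ^ m` is a larger common divisor in `b⁻ᴺ ℤ`. If `m > N`, we borrow:
an element of `S_r ∩ b⁻ᵐ ℤ` can be written with powers of `r` up to `r ^ m`, and its coefficient
of `r ^ m` is then determined modulo `b`; hence for `x ∈ b⁻ᴺ ℤ`, `x - k r ^ m ∈ S_r` with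
`0 < k ≤ b` forces `x - b r ^ m = x - a r ^ (m - 1) ∈ S_r`. Descending to `m = N + 1` makes
`d + b r ^ (N + 1)` a larger common divisor in `b⁻ᴺ ℤ`.
-/

/-- The additive submonoid `S_r = ⟨rⁿ : n ∈ ℕ₀⟩` of `ℚ` generated by the powers of `r`. -/
def Sr (r : ℚ) : AddSubmonoid ℚ :=
  AddSubmonoid.closure {x : ℚ | ∃ n : ℕ, x = r ^ n}

open Finset

namespace Rat

lemma isCoprime_den_num_pow (r : ℚ) (n : ℕ) : IsCoprime (r.den : ℤ) (r.num ^ n) :=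
  (isCoprime_num_den r).symm.pow_right

lemma pow_mul_den_pow (r : ℚ) (n : ℕ) : r ^ n * r.den ^ n = r.num ^ n := by
  rw [← mul_pow, mul_den_eq_num]

lemma den_mul_pow_succ (r : ℚ) (n : ℕ) : (r.den : ℚ) * r ^ (n + 1) = r.num * r ^ n := by
  rw [← mul_den_eq_num]; ring

lemma natCast_natAbs_num {r : ℚ} (h0 : 0 ≤ r) : (r.num.natAbs : ℚ) = r.num := by
  rw [Nat.cast_natAbs, abs_of_nonneg (num_nonneg.2 h0)]

end Rat

/-- `x ∈ b⁻ᴺ ℤ`, where `b` is the denominator of `r`. -/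
def IntegralAt (r : ℚ) (N : ℕ) (x : ℚ) : Prop := ∃ z : ℤ, x * r.den ^ N = z

namespace IntegralAt

variable {r x y : ℚ} {N M : ℕ}

lemma add (hx : IntegralAt r N x) (hy : IntegralAt r N y) : IntegralAt r N (x + y) := by
  obtain ⟨z, hz⟩ := hx; obtain ⟨w, hw⟩ := hy
  exact ⟨z + w, by push_cast; rw [add_mul, hz, hw]⟩

lemma sub (hx : IntegralAt r N x) (hy : IntegralAt r N y) : IntegralAt r N (x - y) := by
  obtain ⟨z, hz⟩ := hx; obtain ⟨w, hw⟩ := hy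
  exact ⟨z - w, by push_cast; rw [sub_mul, hz, hw]⟩

lemma mul_den_pow_add (hx : IntegralAt r N x) (k : ℕ) :
    ∃ z : ℤ, x * r.den ^ (N + k) = z * r.den ^ k := by
  obtain ⟨z, hz⟩ := hx
  exact ⟨z, by rw [pow_add, ← mul_assoc, hz]⟩

lemma mono (hx : IntegralAt r N x) (h : N ≤ M) : IntegralAt r M x := by
  obtain ⟨k, rfl⟩ := Nat.exists_eq_add_of_le h
  obtain ⟨z, hz⟩ := hx.mul_den_pow_add k
  exact ⟨z * r.den ^ k, by rw [hz]; push_cast; rfl⟩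

lemma den_dvd (hx : IntegralAt r N x) (h : N < M) : ∃ z : ℤ, x * r.den ^ M = r.den * z := by
  obtain ⟨k, rfl⟩ := Nat.exists_eq_add_of_lt h
  obtain ⟨z, hz⟩ := hx.mul_den_pow_add (k + 1)
  exact ⟨z * r.den ^ k, by rw [← add_assoc] at hz; rw [hz]; push_cast; ring⟩

lemma pow (r : ℚ) {m : ℕ} (h : m ≤ N) : IntegralAt r N (r ^ m) :=
  mono ⟨r.num ^ m, by rw [Rat.pow_mul_den_pow]; push_cast; rfl⟩ h

lemma den_mul_pow_succ (r : ℚ) (N : ℕ) : IntegralAt r N (r.den * r ^ (N + 1)) :=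
  ⟨r.num ^ (N + 1), by push_cast; rw [← Rat.pow_mul_den_pow]; ring⟩

end IntegralAt

namespace Sr

variable {r x : ℚ} {N : ℕ}

lemma pow_mem (r : ℚ) (n : ℕ) : r ^ n ∈ Sr r :=
  AddSubmonoid.subset_closure ⟨n, rfl⟩

lemma natCast_mul_pow_mem (r : ℚ) (k n : ℕ) : (k : ℚ) * r ^ n ∈ Sr r := by
  simpa [nsmul_eq_mul] using (Sr r).nsmul_mem (pow_mem r n) k

lemma sum_range_mem (r : ℚ) (c : ℕ → ℕ) (N : ℕ) : ∑ n ∈ range N, (c n : ℚ) * r ^ n ∈ Sr r :=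
  sum_mem fun n _ => natCast_mul_pow_mem r (c n) n

lemma nonneg (h0 : 0 ≤ r) (hx : x ∈ Sr r) : 0 ≤ x := by
  induction hx using AddSubmonoid.closure_induction with
  | mem x hx => obtain ⟨n, rfl⟩ := hx; positivity
  | zero => exact le_rfl
  | add x y _ _ hx hy => exact add_nonneg hx hy

lemma exists_sub_pow_mem (hx : x ∈ Sr r) (hx0 : x ≠ 0) : ∃ m, x - r ^ m ∈ Sr r := by
  induction hx using AddSubmonoid.closure_induction with
  | mem x hx => obtain ⟨m, rfl⟩ := hx; exact ⟨m, by simp⟩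
  | zero => exact absurd rfl hx0
  | add x y hx hy ihx ihy =>
    by_cases hx' : x = 0
    · subst hx'
      simpa using ihy (by simpa using hx0)
    · obtain ⟨m, hm⟩ := ihx hx'
      exact ⟨m, by simpa [add_sub_right_comm] using (Sr r).add_mem hm hy⟩

lemma exists_eq_sum_range (hx : x ∈ Sr r) :
    ∃ (c : ℕ → ℕ) (N₀ : ℕ), ∀ N, N₀ ≤ N → x = ∑ n ∈ range N, (c n : ℚ) * r ^ n := by
  have hrange : {x : ℚ | ∃ n : ℕ, x = r ^ n} = Set.range (r ^ ·) := by
    ext; simp [eq_comm]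
  rw [Sr, hrange, AddSubmonoid.mem_closure_range_iff] at hx
  obtain ⟨c, rfl⟩ := hx
  obtain ⟨N₀, hN₀⟩ := c.support.exists_nat_subset_range
  refine ⟨c, N₀, fun N hN => ?_⟩
  rw [c.sum_of_support_subset (hN₀.trans (range_subset_range.2 hN)) _ (by simp)]
  simp [nsmul_eq_mul]

lemma exists_integralAt (hx : x ∈ Sr r) : ∃ N, IntegralAt r N x := by
  induction hx using AddSubmonoid.closure_induction with
  | mem x hx => obtain ⟨n, rfl⟩ := hx; exact ⟨n, .pow r le_rfl⟩
  | zero => exact ⟨0, 0, by simp⟩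
  | add x y _ _ hx hy =>
    obtain ⟨N, hN⟩ := hx; obtain ⟨M, hM⟩ := hy
    exact ⟨max N M, (hN.mono (le_max_left N M)).add (hM.mono (le_max_right N M))⟩

lemma sum_range_succ_update (r : ℚ) (c : ℕ → ℕ) (n v : ℕ) :
    ∑ k ∈ range (n + 1), (Function.update c n v k : ℚ) * r ^ k
      = ∑ k ∈ range n, (c k : ℚ) * r ^ k + v * r ^ n := by
  rw [sum_range_succ, Function.update_self]
  congr 1
  exact sum_congr rfl fun k hk => by rw [Function.update_of_ne (mem_range.1 hk).ne]

lemma den_dvd_sub_coeff_mul_num_pow (c : ℕ → ℕ) (N : ℕ) {z : ℤ}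
    (hz : (∑ n ∈ range (N + 1), (c n : ℚ) * r ^ n) * r.den ^ N = z) :
    (r.den : ℤ) ∣ z - c N * r.num ^ N := by
  have hz' : z = ∑ n ∈ range (N + 1), (c n : ℤ) * r.num ^ n * r.den ^ (N - n) := by
    refine Int.cast_injective (α := ℚ) (hz.symm.trans ?_)
    rw [sum_mul]
    push_cast
    refine sum_congr rfl fun n hn => ?_
    rw [← Nat.add_sub_of_le (Nat.lt_succ_iff.1 (mem_range.1 hn)), pow_add,
      ← Rat.pow_mul_den_pow, Nat.add_sub_cancel_left]
    ring
  rw [hz', sum_range_succ, Nat.sub_self, pow_zero, mul_one, add_sub_cancel_right]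
  refine dvd_sum fun n hn => Dvd.dvd.mul_left (dvd_pow_self _ ?_) _
  exact Nat.sub_ne_zero_of_lt (mem_range.1 hn)

lemma exists_sum_range_eq_of_den_dvd (h0 : 0 ≤ r) (c : ℕ → ℕ) (n : ℕ) (h : r.den ∣ c (n + 1)) :
    ∃ c' : ℕ → ℕ, ∑ k ∈ range (n + 2), (c k : ℚ) * r ^ k
      = ∑ k ∈ range (n + 1), (c' k : ℚ) * r ^ k := by
  obtain ⟨q, hq⟩ := h
  refine ⟨Function.update c n (c n + q * r.num.natAbs), ?_⟩
  rw [sum_range_succ_update, sum_range_succ, sum_range_succ, hq]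
  push_cast
  rw [Rat.natCast_natAbs_num h0, mul_right_comm _ (q : ℚ), Rat.den_mul_pow_succ]
  ring

lemma den_dvd_of_dvd_mul_num_pow {c : ℤ} {n : ℕ} (h : (r.den : ℤ) ∣ c * r.num ^ n) :
    (r.den : ℤ) ∣ c :=
  (Rat.isCoprime_den_num_pow r n).dvd_of_dvd_mul_right h

lemma exists_eq_sum_range_of_integralAt (h0 : 0 ≤ r) (hx : x ∈ Sr r) {m : ℕ}
    (hm : IntegralAt r m x) : ∃ c : ℕ → ℕ, x = ∑ n ∈ range (m + 1), (c n : ℚ) * r ^ n := by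
  suffices H : ∀ N, m + 1 ≤ N → ∀ c : ℕ → ℕ, x = ∑ n ∈ range N, (c n : ℚ) * r ^ n →
      ∃ c' : ℕ → ℕ, x = ∑ n ∈ range (m + 1), (c' n : ℚ) * r ^ n by
    obtain ⟨c, N₀, hc⟩ := exists_eq_sum_range hx
    exact H _ (le_max_left _ N₀) c (hc _ (le_max_right _ _))
  intro N hN
  induction N, hN using Nat.le_induction with
  | base => exact fun c hc => ⟨c, hc⟩
  | succ N hN ih =>
    intro c hc
    obtain ⟨n, rfl⟩ : ∃ n, N = n + 1 := ⟨N - 1, by omega⟩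
    -- the top coefficient is divisible by `r.den` because `x * r.den ^ (n + 1) ∈ r.den • ℤ`
    obtain ⟨z, hz⟩ := hm.den_dvd (M := n + 1) (by omega)
    have htop := den_dvd_sub_coeff_mul_num_pow (z := r.den * z) c (n + 1)
      (by rw [← hc, hz]; push_cast; rfl)
    have hdvd : r.den ∣ c (n + 1) := Int.natCast_dvd_natCast.1 <|
      den_dvd_of_dvd_mul_num_pow (n := n + 1) (by simpa using dvd_sub (dvd_mul_right _ z) htop)
    obtain ⟨c', hc'⟩ := exists_sum_range_eq_of_den_dvd h0 c n hdvd
    exact ih c' (hc.trans hc')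

lemma sub_natCast_mul_pow_mem (h0 : 0 ≤ r) (hx : x ∈ Sr r) {m k : ℕ} {z : ℤ}
    (hz : x * r.den ^ m = z) (hk : k < r.den) (hdvd : (r.den : ℤ) ∣ z - k * r.num ^ m) :
    x - k * r ^ m ∈ Sr r := by
  obtain ⟨c, rfl⟩ := exists_eq_sum_range_of_integralAt h0 hx ⟨z, hz⟩
  have hcm : (r.den : ℤ) ∣ (c m : ℤ) - k := by
    refine den_dvd_of_dvd_mul_num_pow (n := m) ?_
    rw [sub_mul]
    simpa using dvd_sub hdvd (den_dvd_sub_coeff_mul_num_pow c m hz)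
  have hkc : k ≤ c m := by
    have := (Nat.modEq_iff_dvd.2 hcm).symm
    rw [Nat.ModEq, Nat.mod_eq_of_lt hk] at this
    exact this ▸ Nat.mod_le _ _
  have hsub : ∑ n ∈ range (m + 1), (c n : ℚ) * r ^ n - k * r ^ m
      = ∑ n ∈ range (m + 1), (Function.update c m (c m - k) n : ℚ) * r ^ n := by
    rw [sum_range_succ_update, sum_range_succ, Nat.cast_sub hkc]
    ring
  exact hsub ▸ sum_range_mem r _ _

lemma sub_den_mul_pow_mem (h0 : 0 ≤ r) (hx : IntegralAt r N x) {m k : ℕ} (hm : N < m)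
    (hk0 : 0 < k) (hkb : k ≤ r.den) (hmem : x - k * r ^ m ∈ Sr r) :
    x - r.den * r ^ m ∈ Sr r := by
  obtain ⟨y, hy⟩ := hx.den_dvd hm
  have hz : (x - k * r ^ m) * r.den ^ m = ((r.den * y - k * r.num ^ m : ℤ) : ℚ) := by
    rw [sub_mul, hy, mul_assoc, Rat.pow_mul_den_pow]
    push_cast; rfl
  have hdvd : (r.den : ℤ) ∣ (r.den * y - k * r.num ^ m) - ((r.den - k : ℕ) : ℤ) * r.num ^ m :=
    ⟨y - r.num ^ m, by push_cast [hkb]; ring⟩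
  have := sub_natCast_mul_pow_mem h0 hmem hz (by omega) hdvd
  rwa [Nat.cast_sub hkb, sub_sub, ← add_mul, add_sub_cancel] at this

lemma sub_den_mul_pow_succ_mem (h0 : 0 < r) (h1 : r < 1) (hx : IntegralAt r N x) {m : ℕ}
    (hm : N < m) (hmem : x - r ^ m ∈ Sr r) : x - r.den * r ^ (N + 1) ∈ Sr r := by
  have hnum0 : 0 < r.num.natAbs := Int.natAbs_pos.2 (Rat.num_pos.2 h0).ne'
  have hnum : r.num.natAbs ≤ r.den := by
    have := Rat.num_lt_denom_iff.2 h1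
    have := Rat.num_pos.2 h0
    omega
  suffices H : ∀ k, 0 < k → k ≤ r.den → x - k * r ^ m ∈ Sr r → x - r.den * r ^ (N + 1) ∈ Sr r from
    H 1 one_pos r.den_pos (by simpa using hmem)
  clear hmem
  replace hm : N + 1 ≤ m := hm
  induction m, hm using Nat.le_induction with
  | base => exact fun k hk0 hkb hmem => sub_den_mul_pow_mem h0.le hx (by omega) hk0 hkb hmem
  | succ m hm ih =>
    intro k hk0 hkb hmem
    have := sub_den_mul_pow_mem h0.le hx (by omega) hk0 hkb hmem
    rw [Rat.den_mul_pow_succ, ← Rat.natCast_natAbs_num h0.le] at this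
    exact ih _ hnum0 hnum this

lemma exists_integralAt_pos_forall_sub_mem (h0 : 0 < r) (h1 : r < 1) (N : ℕ) {e : ℚ}
    (he : e ∈ Sr r) (he0 : e ≠ 0) :
    ∃ f ∈ Sr r, 0 < f ∧ IntegralAt r N f ∧
      ∀ x, IntegralAt r N x → x - e ∈ Sr r → x - f ∈ Sr r := by
  obtain ⟨m, hm⟩ := exists_sub_pow_mem he he0
  have hsub : ∀ x, x - e ∈ Sr r → x - r ^ m ∈ Sr r := fun x hx => by
    simpa using (Sr r).add_mem hx hm
  rcases le_or_gt m N with hmN | hNm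
  · exact ⟨r ^ m, pow_mem r m, by positivity, .pow r hmN, fun x _ hx => hsub x hx⟩
  · refine ⟨r.den * r ^ (N + 1), natCast_mul_pow_mem r _ _, by positivity,
      .den_mul_pow_succ r N, fun x hxN hx => ?_⟩
    exact sub_den_mul_pow_succ_mem h0 h1 hxN hNm (hsub x hx)

lemma exists_integralAt_finset {T : Finset ℚ} (hT : (T : Set ℚ) ⊆ Sr r) :
    ∃ N, ∀ t ∈ T, IntegralAt r N t := by
  refine ((Filter.eventually_all_finset T).2 fun t ht => ?_).exists (f := Filter.atTop)
  obtain ⟨N, hN⟩ := exists_integralAt (hT ht)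
  exact Filter.eventually_atTop.2 ⟨N, fun M hM => hN.mono hM⟩

lemma exists_max_integralAt_forall_sub_mem (h0 : 0 ≤ r) (N : ℕ) {T : Finset ℚ}
    (hT : (T : Set ℚ) ⊆ Sr r) (hne : T.Nonempty) :
    ∃ d ∈ Sr r, IntegralAt r N d ∧ (∀ t ∈ T, t - d ∈ Sr r) ∧
      ∀ d' ∈ Sr r, IntegralAt r N d' → (∀ t ∈ T, t - d' ∈ Sr r) → d' ≤ d := by
  have hb : (0 : ℚ) < r.den ^ N := by positivity
  let P : ℤ → Prop := fun z => (z / r.den ^ N : ℚ) ∈ Sr r ∧ ∀ t ∈ T, t - z / r.den ^ N ∈ Sr r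
  obtain ⟨t₀, ht₀⟩ := hne
  have hbdd : ∀ z, P z → z ≤ ⌈t₀ * r.den ^ N⌉ := fun z ⟨_, hzT⟩ => by
    have := nonneg h0 (hzT t₀ ht₀)
    rw [sub_nonneg, div_le_iff₀ hb] at this
    exact Int.cast_le.1 (this.trans (Int.le_ceil _))
  obtain ⟨z, ⟨hzS, hzT⟩, hmax⟩ :=
    Int.exists_greatest_of_bdd ⟨_, hbdd⟩ ⟨0, by simpa [P] using fun t ht => hT ht⟩
  refine ⟨z / r.den ^ N, hzS, ⟨z, div_mul_cancel₀ _ hb.ne'⟩, hzT, ?_⟩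
  rintro d' hd'S ⟨z', hz'⟩ hd'T
  have hd' : d' = z' / r.den ^ N := by rw [← hz', mul_div_cancel_right₀ _ hb.ne']
  rw [hd'] at hd'S hd'T ⊢
  gcongr
  exact_mod_cast hmax z' ⟨hd'S, hd'T⟩

end Sr

theorem stmt11_general (r : ℚ) (h0 : 0 < r) (h1 : r < 1)
    (T : Finset ℚ) (hT : (T : Set ℚ) ⊆ (Sr r : Set ℚ)) (hne : T.Nonempty) :
    ∃ d ∈ Sr r, (∀ t ∈ T, ∃ q ∈ Sr r, t = d + q) ∧
      ∀ e ∈ Sr r, (∀ t ∈ T, ∃ q ∈ Sr r, t = d + (e + q)) →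
        ∃ e' ∈ Sr r, e + e' = 0 := by
  obtain ⟨N, hN⟩ := Sr.exists_integralAt_finset hT
  obtain ⟨d, hdS, hdN, hdT, hmax⟩ := Sr.exists_max_integralAt_forall_sub_mem h0.le N hT hne
  refine ⟨d, hdS, fun t ht => ⟨t - d, hdT t ht, by ring⟩, fun e he hdiv => ⟨0, zero_mem _, ?_⟩⟩
  by_contra he0
  rw [add_zero] at he0
  obtain ⟨f, hfS, hf0, hfN, hf⟩ := Sr.exists_integralAt_pos_forall_sub_mem h0 h1 N he he0
  have hdf : ∀ t ∈ T, t - (d + f) ∈ Sr r := fun t ht => by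
    obtain ⟨q, hq, rfl⟩ := hdiv t ht
    rw [← sub_sub]
    exact hf _ ((hN _ ht).sub hdN) (by simpa using hq)
  linarith [hmax _ (add_mem hdS hfS) (hdN.add hfN) hdf]

/-- For a rational `r` with `0 < r < 1` and numerator at least `2`, the additive monoid
`S_r = ⟨rⁿ : n ∈ ℕ₀⟩` is an MCD-monoid: every finite nonempty subset `T` of `S_r` admits a
maximal common (additive) divisor `d`, i.e. a common divisor `d` such that every common divisor
`e` of `{t - d : t ∈ T}` is invertible in `S_r`. -/
theorem stmt11 (r : ℚ) (h0 : 0 < r) (h1 : r < 1) (hnum : 2 ≤ r.num)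
    (T : Finset ℚ) (hT : (T : Set ℚ) ⊆ (Sr r : Set ℚ)) (hne : T.Nonempty) :
    ∃ d ∈ Sr r, (∀ t ∈ T, ∃ q ∈ Sr r, t = d + q) ∧
      ∀ e ∈ Sr r, (∀ t ∈ T, ∃ q ∈ Sr r, t = d + (e + q)) →
        ∃ e' ∈ Sr r, e + e' = 0 :=
  stmt11_general r h0 h1 T hT hne
end

section
/- Let S be a semidomain. If S is a bounded factorization semidomain, witnessed by a length function ℓ on S*, then the map ℓ_x(f) = ℓ(leading coefficient of f) + deg f is a length function on S[x]*; hence S[x] is a bounded factorization semidomain. -/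
open Polynomial

/-!
A semidomain has no zero divisors, and over such a semiring the leading coefficient and the degree are both
multiplicative (`leadingCoeff_mul`, `natDegree_mul`), so `ℓ(lc f) + deg f` inherits
superadditivity from `ℓ`. It vanishes exactly on the nonzero constants `C a` with `ℓ a = 0`,
which are the units of `S[x]` since a unit of `S[x]` has degree `0`.
-/

structure IsLengthFunction {M : Type*} [MonoidWithZero M] (ℓ : M → ℕ) : Prop where
  eq_zero_iff_isUnit : ∀ a : M, a ≠ 0 → (ℓ a = 0 ↔ IsUnit a)
  add_le_mul : ∀ a b : M, a ≠ 0 → b ≠ 0 → ℓ a + ℓ b ≤ ℓ (a * b)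

theorem IsSemidomain.noZeroDivisors {S : Type} [CommSemiring S] (hS : IsSemidomain S) :
    NoZeroDivisors S := by
  obtain ⟨⟨R, φ, hφ⟩⟩ := hS
  exact hφ.noZeroDivisors φ (map_zero φ) (map_mul φ)

namespace Polynomial

theorem isUnit_iff_natDegree_eq_zero_and_isUnit_leadingCoeff {R : Type*} [Semiring R]
    [NoZeroDivisors R] {p : R[X]} : IsUnit p ↔ p.natDegree = 0 ∧ IsUnit p.leadingCoeff := by
  refine ⟨fun hp => ⟨natDegree_eq_zero_of_isUnit hp, ?_⟩, fun ⟨hdeg, hlc⟩ => ?_⟩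
  · have hdeg := natDegree_eq_zero_of_isUnit hp
    rwa [leadingCoeff, hdeg, ← isUnit_C, ← eq_C_of_natDegree_eq_zero hdeg]
  · rw [leadingCoeff, hdeg] at hlc
    rw [eq_C_of_natDegree_eq_zero hdeg]
    exact isUnit_C.mpr hlc

noncomputable def degLength {R : Type*} [Semiring R] (ℓ : R → ℕ) (f : R[X]) : ℕ :=
  ℓ f.leadingCoeff + f.natDegree

end Polynomial

theorem IsLengthFunction.degLength {R : Type*} [Semiring R] [NoZeroDivisors R] {ℓ : R → ℕ}
    (hℓ : IsLengthFunction ℓ) : IsLengthFunction (degLength ℓ) where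
  eq_zero_iff_isUnit f hf := by
    rw [Polynomial.degLength, Nat.add_eq_zero_iff,
      isUnit_iff_natDegree_eq_zero_and_isUnit_leadingCoeff,
      hℓ.eq_zero_iff_isUnit _ (leadingCoeff_ne_zero.mpr hf), and_comm]
  add_le_mul f g hf hg := by
    have hlc := hℓ.add_le_mul _ _ (leadingCoeff_ne_zero.mpr hf) (leadingCoeff_ne_zero.mpr hg)
    simp only [Polynomial.degLength, leadingCoeff_mul, natDegree_mul hf hg]
    omega

/-- Let `S` be a semidomain that is a bounded factorization semidomain, witnessed by a length
function `ℓ` on its nonzero elements. Then `ℓ_x(f) = ℓ(leadingCoeff f) + deg f` is a length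
function on the nonzero elements of `S[x]`; hence `S[x]` is a bounded factorization
semidomain. -/
theorem stmt12 (S : Type) [CommSemiring S] (hS : IsSemidomain S) (ℓ : S → ℕ)
    (hu : ∀ a : S, a ≠ 0 → (ℓ a = 0 ↔ IsUnit a))
    (hmul : ∀ a b : S, a ≠ 0 → b ≠ 0 → ℓ a + ℓ b ≤ ℓ (a * b)) :
    (∀ f : Polynomial S, f ≠ 0 →
      (ℓ f.leadingCoeff + f.natDegree = 0 ↔ IsUnit f)) ∧
    (∀ f g : Polynomial S, f ≠ 0 → g ≠ 0 →
      (ℓ f.leadingCoeff + f.natDegree) + (ℓ g.leadingCoeff + g.natDegree) ≤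
        ℓ (f * g).leadingCoeff + (f * g).natDegree) := by
  have := hS.noZeroDivisors
  have hx := (IsLengthFunction.mk hu hmul).degLength
  exact ⟨hx.eq_zero_iff_isUnit, hx.add_le_mul⟩
end

section
/- Let S be a semidomain. Then S is a bounded factorization semidomain if and only if S[x^{±1}] is a bounded factorization semidomain. -/
open Polynomial

/-- A commutative monoid with zero is a bounded factorization monoid iff it admits a length
function on its nonzero elements: `ℓ` vanishes exactly on units and is superadditive on
products. -/
def IsBFS (M : Type) [CommMonoidWithZero M] : Prop :=
  ∃ ℓ : M → ℕ, (∀ a : M, a ≠ 0 → (ℓ a = 0 ↔ IsUnit a)) ∧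
    ∀ a b : M, a ≠ 0 → b ≠ 0 → ℓ a + ℓ b ≤ ℓ (a * b)

/-!
A length function `ℓ` on `S` induces one on `S[x^{±1}]`: write a nonzero Laurent polynomial as
`x^{-n} p` with `p ∈ S[x]` and add to `ℓ` of the leading coefficient of `p` the number of
degrees `p` spans. Leading coefficients and both the degree and the trailing degree are
multiplicative because `S` has no zero divisors, and the length vanishes only on `u x^k` with
`u` a unit. Conversely, restricting a length function to the constants works because
`S → S[x^{±1}] → S`, `a ↦ a ↦ a(1)`, is the identity.
-/

section Length

variable {M N : Type} [CommMonoidWithZero M] [CommMonoidWithZero N]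

theorem IsBFS.of_superadditive (L : M → ℕ) (hL1 : L 1 = 0)
    (hL0 : ∀ a, a ≠ 0 → L a = 0 → IsUnit a)
    (hL : ∀ a b : M, a ≠ 0 → b ≠ 0 → L a + L b ≤ L (a * b)) : IsBFS M := by
  refine ⟨L, fun a ha => ⟨hL0 a ha, ?_⟩, hL⟩
  rintro ⟨u, rfl⟩
  have : Nontrivial M := nontrivial_of_ne _ _ ha
  have := hL _ _ ha u⁻¹.ne_zero
  rw [u.mul_inv, hL1] at this
  omega

theorem IsBFS.of_leftInverse (φ : M →*₀ N) (ψ : N →* M) (h : Function.LeftInverse ψ φ)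
    (hN : IsBFS N) : IsBFS M := by
  obtain ⟨ℓ, hℓ0, hℓ⟩ := hN
  have hφ : ∀ a, a ≠ 0 → φ a ≠ 0 := fun a ha hφa =>
    ha (h.injective (hφa.trans (map_zero φ).symm))
  refine ⟨ℓ ∘ φ, fun a ha => (hℓ0 _ (hφ a ha)).trans ⟨fun hu => ?_, IsUnit.map φ⟩,
    fun a b ha hb => by simpa only [Function.comp, map_mul] using hℓ _ _ (hφ a ha) (hφ b hb)⟩
  simpa only [h a] using hu.map ψ

end Length

namespace Polynomial

variable {S : Type} [CommSemiring S]

noncomputable def shiftLength (ℓ : S → ℕ) (p : S[X]) : ℕ :=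
  ℓ p.leadingCoeff + (p.natDegree - p.natTrailingDegree)

theorem shiftLength_mul_X_pow [NoZeroDivisors S] (ℓ : S → ℕ) (p : S[X]) (m : ℕ) :
    shiftLength ℓ (p * X ^ m) = shiftLength ℓ p := by
  rcases eq_or_ne p 0 with rfl | hp
  · rw [zero_mul]
  have := nontrivial_iff.mp (nontrivial_of_ne p 0 hp)
  rw [shiftLength, shiftLength, leadingCoeff_mul_X_pow, natDegree_mul_X_pow m hp,
    natTrailingDegree_mul_X_pow hp]
  omega

theorem shiftLength_add_le_shiftLength_mul [NoZeroDivisors S] {ℓ : S → ℕ}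
    (hℓ : ∀ a b : S, a ≠ 0 → b ≠ 0 → ℓ a + ℓ b ≤ ℓ (a * b)) {p q : S[X]} (hp : p ≠ 0)
    (hq : q ≠ 0) : shiftLength ℓ p + shiftLength ℓ q ≤ shiftLength ℓ (p * q) := by
  have hlc := hℓ _ _ (leadingCoeff_ne_zero.mpr hp) (leadingCoeff_ne_zero.mpr hq)
  have := p.natTrailingDegree_le_natDegree
  have := q.natTrailingDegree_le_natDegree
  rw [shiftLength, shiftLength, shiftLength, leadingCoeff_mul, natDegree_mul hp hq,
    natTrailingDegree_mul hp hq]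
  omega

theorem eq_C_mul_X_pow_of_natDegree_le_natTrailingDegree {p : S[X]}
    (h : p.natDegree ≤ p.natTrailingDegree) : p = C p.leadingCoeff * X ^ p.natDegree := by
  ext i
  rw [coeff_C_mul_X_pow]
  obtain hi | rfl | hi := lt_trichotomy i p.natDegree
  · rw [if_neg hi.ne, coeff_eq_zero_of_lt_natTrailingDegree (hi.trans_le h)]
  · rw [if_pos rfl, leadingCoeff]
  · rw [if_neg hi.ne', coeff_eq_zero_of_natDegree_lt hi]

theorem isUnit_toLaurent_of_shiftLength_eq_zero {ℓ : S → ℕ}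
    (hℓ : ∀ a, a ≠ 0 → ℓ a = 0 → IsUnit a) {p : S[X]} (hp : p ≠ 0)
    (h : shiftLength ℓ p = 0) : IsUnit (toLaurent p) := by
  rw [shiftLength, Nat.add_eq_zero_iff, Nat.sub_eq_zero_iff_le] at h
  rw [eq_C_mul_X_pow_of_natDegree_le_natTrailingDegree h.2, toLaurent_C_mul_X_pow]
  exact ((hℓ _ (leadingCoeff_ne_zero.mpr hp) h.1).map LaurentPolynomial.C).mul
    (LaurentPolynomial.isUnit_T _)

end Polynomial

namespace LaurentPolynomial

open scoped LaurentPolynomial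

variable {S : Type} [CommSemiring S]

noncomputable def shiftLength (ℓ : S → ℕ) (f : S[T;T⁻¹]) : ℕ :=
  (exists_T_pow f).choose_spec.choose.shiftLength ℓ

theorem shiftLength_eq [NoZeroDivisors S] (ℓ : S → ℕ) {f : S[T;T⁻¹]} {n : ℕ} {p : S[X]}
    (hp : toLaurent p = f * T n) : shiftLength ℓ f = p.shiftLength ℓ := by
  have hq := (exists_T_pow f).choose_spec.choose_spec
  set q := (exists_T_pow f).choose_spec.choose
  set m := (exists_T_pow f).choose
  have hqp : q * X ^ n = p * X ^ m := by
    apply toLaurent_injective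
    rw [map_mul, map_mul, toLaurent_X_pow, toLaurent_X_pow, hp, hq, mul_T_assoc, mul_T_assoc,
      add_comm]
  rw [shiftLength, ← shiftLength_mul_X_pow ℓ q n, hqp, shiftLength_mul_X_pow]

theorem ne_zero_of_toLaurent_eq_mul_T {f : S[T;T⁻¹]} {n : ℕ} {p : S[X]}
    (hp : toLaurent p = f * T n) (hf : f ≠ 0) : p ≠ 0 := by
  rintro rfl
  rw [map_zero] at hp
  exact hf ((isUnit_T (n : ℤ)).mul_left_eq_zero.mp hp.symm)

end LaurentPolynomial

open LaurentPolynomial in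
theorem IsBFS.laurentPolynomial {S : Type} [CommSemiring S] [NoZeroDivisors S] [Nontrivial S]
    (h : IsBFS S) : IsBFS S[T;T⁻¹] := by
  obtain ⟨ℓ, hℓ0, hℓ⟩ := h
  refine IsBFS.of_superadditive (shiftLength ℓ) ?_ (fun f hf hf0 => ?_) (fun f g hf hg => ?_)
  · rw [shiftLength_eq ℓ (n := 0) (p := 1) (by rw [map_one, Nat.cast_zero, T_zero, one_mul]),
      Polynomial.shiftLength]
    simpa using (hℓ0 1 one_ne_zero).mpr isUnit_one
  · obtain ⟨n, p, hp⟩ := exists_T_pow f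
    rw [shiftLength_eq ℓ hp] at hf0
    have hu := isUnit_toLaurent_of_shiftLength_eq_zero (fun a ha => (hℓ0 a ha).mp)
      (ne_zero_of_toLaurent_eq_mul_T hp hf) hf0
    rw [hp] at hu
    exact (IsUnit.mul_iff.mp hu).1
  · obtain ⟨n, p, hp⟩ := exists_T_pow f
    obtain ⟨m, q, hq⟩ := exists_T_pow g
    have hpq : toLaurent (p * q) = f * g * T ↑(n + m) := by
      rw [map_mul, hp, hq, mul_mul_mul_comm, Nat.cast_add, T_add]
    rw [shiftLength_eq ℓ hp, shiftLength_eq ℓ hq, shiftLength_eq ℓ hpq]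
    exact shiftLength_add_le_shiftLength_mul hℓ (ne_zero_of_toLaurent_eq_mul_T hp hf)
      (ne_zero_of_toLaurent_eq_mul_T hq hg)

open LaurentPolynomial in
theorem IsBFS.of_laurentPolynomial {S : Type} [CommSemiring S] (h : IsBFS S[T;T⁻¹]) :
    IsBFS S :=
  h.of_leftInverse (C : S →+* S[T;T⁻¹]).toMonoidWithZeroHom
    (LaurentPolynomial.eval₂ (RingHom.id S) 1).toMonoidHom (fun a => by simp)

/-- For a semidomain `S`: `S` is a bounded factorization semidomain if and only if the Laurent
polynomial semidomain `S[x^{±1}]` is a bounded factorization semidomain. -/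
theorem stmt13 (S : Type) [CommSemiring S] (hS : IsSemidomain S) :
    IsBFS S ↔ IsBFS (LaurentPolynomial S) := by
  obtain ⟨W⟩ := hS
  let := W.commRing
  have := W.isDomain
  have : NoZeroDivisors S := W.inj.noZeroDivisors W.f (map_zero _) (map_mul _)
  have : Nontrivial S := W.f.domain_nontrivial
  exact ⟨IsBFS.laurentPolynomial, IsBFS.of_laurentPolynomial⟩
end

section
/- Let S be a semidomain. If S is a finite factorization semidomain, then S[x] is a finite factorization semidomain. -/
open Polynomial

/-- A commutative monoid with zero is a finite factorization monoid if every nonzero element has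
only finitely many divisors up to associates. -/
def IsFFS (M : Type) [CommMonoidWithZero M] : Prop :=
  ∀ a : M, a ≠ 0 → ∃ F : Finset M, ∀ b : M, b ∣ a → ∃ c ∈ F, Associated b c
/-!
Embed `S` into a field `K`, via the fraction field of a domain containing it. A divisor `b` of
`a` in `S[X]` is determined up to associates by the class of its image in `K[X]` and the class of
its leading coefficient in `S`: if `b' = u • b` in `K[X]`, comparing leading coefficients shows
that `u` is the image of a unit of `S`. The first class ranges over the divisors of `a` in the UFD
`K[X]`, the second over the divisors of the leading coefficient of `a` in `S`, and both are finite.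
-/

theorem exists_finset_associated_of_classifier {M α : Type*} [Monoid M] (a : M) (κ : M → α)
    (hfin : (κ '' {b | b ∣ a}).Finite)
    (hκ : ∀ b b', b ∣ a → b' ∣ a → κ b = κ b' → Associated b b') :
    ∃ F : Finset M, ∀ b, b ∣ a → ∃ c ∈ F, Associated b c := by
  classical
  refine ⟨hfin.toFinset.image (Function.invFunOn κ {b | b ∣ a}), fun b hb => ?_⟩
  have hex : ∃ c ∈ {b | b ∣ a}, κ c = κ b := ⟨b, hb, rfl⟩
  exact ⟨_, Finset.mem_image_of_mem _ (hfin.mem_toFinset.mpr ⟨b, hb, rfl⟩),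
    hκ _ _ hb (Function.invFunOn_mem hex) (Function.invFunOn_eq hex).symm⟩

theorem UniqueFactorizationMonoid.isFFS (M : Type) [CommMonoidWithZero M]
    [UniqueFactorizationMonoid M] : IsFFS M := by
  classical
  intro a ha
  let _ := fintypeSubtypeDvd (Associates.mk a) (Associates.mk_ne_zero.mpr ha)
  refine ⟨Finset.univ.image fun x : {x // x ∣ Associates.mk a} => Quot.out x.1,
    fun b hb => ?_⟩
  exact ⟨_, Finset.mem_image_of_mem _ (Finset.mem_univ ⟨_, Associates.mk_dvd_mk.mpr hb⟩),
    (Associates.mk_quot_out b).symm⟩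

namespace Polynomial

variable {S : Type} [CommSemiring S]

theorem associated_of_associated_map_of_associated_leadingCoeff {R : Type*} [CommRing R]
    [IsDomain R] {g : S →+* R} (hg : Function.Injective g)
    {p q : S[X]} (hp : p ≠ 0) (hmap : Associated (p.map g) (q.map g))
    (hlc : Associated p.leadingCoeff q.leadingCoeff) : Associated p q := by
  obtain ⟨u, hu⟩ := hmap
  obtain ⟨k, -, hk⟩ := Polynomial.isUnit_iff.mp u.isUnit
  obtain ⟨v, hv⟩ := hlc
  have hk_lc : g p.leadingCoeff * k = g q.leadingCoeff := by
    rw [← leadingCoeff_map_of_injective hg, ← leadingCoeff_map_of_injective hg, ← hu, ← hk,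
      leadingCoeff_mul, leadingCoeff_C]
  have hkv : k = g v := by
    refine mul_left_cancel₀ (fun h0 => hp ?_) (hk_lc.trans (by rw [← hv, map_mul]))
    exact leadingCoeff_eq_zero.mp (hg (h0.trans (map_zero g).symm))
  refine ⟨Units.map (C : S →+* S[X]).toMonoidHom v, map_injective g hg ?_⟩
  simp [← hu, ← hk, hkv]

theorem isFFS_of_injective {K : Type} [Field K] (g : S →+* K)
    (hg : Function.Injective g) (hS : IsFFS S) : IsFFS S[X] := by
  have : NoZeroDivisors S := hg.noZeroDivisors g (map_zero g) (map_mul g)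
  intro a ha
  obtain ⟨D, hD⟩ := hS a.leadingCoeff (leadingCoeff_ne_zero.mpr ha)
  obtain ⟨E, hE⟩ := UniqueFactorizationMonoid.isFFS K[X] (a.map g)
    ((Polynomial.map_ne_zero_iff hg).mpr ha)
  refine exists_finset_associated_of_classifier a
    (fun b => (Associates.mk (b.map g), Associates.mk b.leadingCoeff)) ?_ ?_
  · refine ((E.finite_toSet.image Associates.mk).prod
      (D.finite_toSet.image Associates.mk)).subset ?_
    rintro _ ⟨b, hb, rfl⟩
    obtain ⟨c, hc, hbc⟩ := hE _ (Polynomial.map_dvd g hb)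
    obtain ⟨d, hd, hbd⟩ := hD _ (_root_.map_dvd leadingCoeffHom hb)
    exact ⟨⟨c, hc, Associates.mk_eq_mk_iff_associated.mpr hbc.symm⟩,
      ⟨d, hd, Associates.mk_eq_mk_iff_associated.mpr hbd.symm⟩⟩
  · intro b b' hb _ hκ
    simp only [Prod.ext_iff, Associates.mk_eq_mk_iff_associated] at hκ
    exact associated_of_associated_map_of_associated_leadingCoeff hg
      (ne_zero_of_dvd_ne_zero ha hb) hκ.1 hκ.2

end Polynomial

/-- For a semidomain `S`: if `S` is a finite factorization semidomain, then the polynomial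
semidomain `S[x]` is a finite factorization semidomain. -/
theorem stmt14 (S : Type) [CommSemiring S] (hS : IsSemidomain S)
    (h : IsFFS S) : IsFFS (Polynomial S) := by
  obtain ⟨W⟩ := hS
  let _ := W.commRing
  have _ := W.isDomain
  exact isFFS_of_injective ((algebraMap W.R (FractionRing W.R)).comp W.f)
    ((IsFractionRing.injective W.R (FractionRing W.R)).comp W.inj) h
end

section
/- For every integer k ≥ 2, the set S = ℕ₀ ∪ ℝ≥k is a positive semiring (closed under addition and multiplication and containing 0 and 1) that is a bounded factorization semidomain but not a finite factorization semidomain. -/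
/-- For every integer `k ≥ 2`, the set `ℕ₀ ∪ ℝ≥k` is a positive semiring (a subsemiring of `ℝ`
consisting of nonnegative numbers) that is a bounded factorization semidomain but not a finite
factorization semidomain. -/
theorem stmt15 (k : ℕ) (hk : 2 ≤ k) :
    ∃ T : Subsemiring ℝ,
      (T : Set ℝ) = {x : ℝ | (∃ n : ℕ, x = (n : ℝ)) ∨ (k : ℝ) ≤ x} ∧
      (∀ x ∈ T, (0 : ℝ) ≤ x) ∧
      IsBFS T ∧ ¬ IsFFS T := by
  have hk2 : (2 : ℝ) ≤ (k : ℝ) := by exact_mod_cast hk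
  set S : Set ℝ := {x : ℝ | (∃ n : ℕ, x = (n : ℝ)) ∨ (k : ℝ) ≤ x} with hS
  have hnonneg : ∀ x ∈ S, (0 : ℝ) ≤ x := by
    rintro x (⟨n, rfl⟩ | hx)
    · positivity
    · linarith
  have hone_le : ∀ x ∈ S, x ≠ 0 → (1 : ℝ) ≤ x := by
    rintro x (⟨n, rfl⟩ | hx) hx0
    · have : n ≠ 0 := by rintro rfl; simp at hx0
      exact_mod_cast Nat.one_le_iff_ne_zero.mpr this
    · linarith
  obtain ⟨T, hT⟩ : ∃ T : Subsemiring ℝ, (T : Set ℝ) = S := by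
    refine ⟨{ carrier := S
              zero_mem' := Or.inl ⟨0, by norm_num⟩
              one_mem' := Or.inl ⟨1, by norm_num⟩
              add_mem' := ?_
              mul_mem' := ?_ }, rfl⟩
    · -- mul_mem
      rintro x y hx hy
      rcases hx with ⟨m, rfl⟩ | hx
      · rcases hy with ⟨n, rfl⟩ | hy
        · exact Or.inl ⟨m * n, by push_cast; ring⟩
        · rcases Nat.eq_zero_or_pos m with rfl | hm
          · exact Or.inl ⟨0, by simp⟩
          · have hm1 : (1 : ℝ) ≤ (m : ℝ) := by exact_mod_cast hm
            exact Or.inr (by nlinarith)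
      · rcases hy with ⟨n, rfl⟩ | hy
        · rcases Nat.eq_zero_or_pos n with rfl | hn
          · exact Or.inl ⟨0, by simp⟩
          · have hn1 : (1 : ℝ) ≤ (n : ℝ) := by exact_mod_cast hn
            exact Or.inr (by nlinarith)
        · exact Or.inr (by nlinarith)
    · -- add_mem
      rintro x y hx hy
      rcases hx with ⟨m, rfl⟩ | hx
      · rcases hy with ⟨n, rfl⟩ | hy
        · exact Or.inl ⟨m + n, by push_cast; ring⟩
        · have hm0 : (0 : ℝ) ≤ (m : ℝ) := by positivity
          exact Or.inr (by linarith)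
      · have hy0 : (0 : ℝ) ≤ y := hnonneg y hy
        exact Or.inr (by linarith)
  have hmemT : ∀ x : ℝ, x ∈ T ↔ x ∈ S := fun x => by rw [← SetLike.mem_coe, hT]
  -- every nonzero element of T has value ≥ 1
  have honeT : ∀ a : T, a ≠ 0 → (1 : ℝ) ≤ (a : ℝ) := by
    intro a ha
    exact hone_le (a : ℝ) ((hmemT _).mp a.2) (fun h => ha (Subtype.ext h))
  -- the only unit of T is 1
  have hunit : ∀ u : Tˣ, ((u : T) : ℝ) = 1 := by
    intro u
    have h := congrArg (fun x : T => (x : ℝ)) u.mul_inv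
    push_cast at h
    have hv0 : ((u : T) : ℝ) ≠ 0 := by
      intro h0; rw [h0, zero_mul] at h; exact zero_ne_one h
    have hw0 : (((u⁻¹ : Tˣ) : T) : ℝ) ≠ 0 := by
      intro h0; rw [h0, mul_zero] at h; exact zero_ne_one h
    have hv : (1 : ℝ) ≤ ((u : T) : ℝ) := honeT _ (fun h' => hv0 (by rw [h']; rfl))
    have hw : (1 : ℝ) ≤ (((u⁻¹ : Tˣ) : T) : ℝ) := honeT _ (fun h' => hw0 (by rw [h']; rfl))
    nlinarith
  refine ⟨T, hT, fun x hx => hnonneg x ((hmemT x).mp hx), ?_, ?_⟩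
  · -- IsBFS
    refine ⟨fun a => Nat.log 2 ⌊(a : ℝ)⌋₊, ?_, ?_⟩
    · intro a ha
      have h1 : (1 : ℝ) ≤ (a : ℝ) := honeT a ha
      constructor
      · intro h0
        have hlt : ⌊(a : ℝ)⌋₊ < 2 := by
          rcases Nat.log_eq_zero_iff.mp h0 with h | h
          · exact h
          · omega
        have h2 : (a : ℝ) < 2 := by
          have := Nat.lt_floor_add_one (a : ℝ)
          have h2' : (⌊(a : ℝ)⌋₊ : ℝ) ≤ 1 := by exact_mod_cast Nat.lt_succ_iff.mp hlt
          linarith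
        have ha1 : (a : ℝ) = 1 := by
          rcases (hmemT _).mp a.2 with ⟨n, hn⟩ | hge
          · have hn1 : (1 : ℝ) ≤ (n : ℝ) := by rw [← hn]; exact h1
            have hn2 : ((n : ℝ)) < 2 := by rw [← hn]; exact h2
            have : n = 1 := by
              have h1' : 1 ≤ n := by exact_mod_cast hn1
              have h2' : n < 2 := by exact_mod_cast hn2
              omega
            rw [hn, this]; norm_num
          · linarith
        have : a = 1 := Subtype.ext (by rw [ha1]; rfl)
        rw [this]; exact isUnit_one
      · intro hu
        obtain ⟨u, rfl⟩ := hu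
        show Nat.log 2 ⌊((u : T) : ℝ)⌋₊ = 0
        rw [hunit u]
        norm_num
    · intro a b ha hb
      have hav : (1 : ℝ) ≤ (a : ℝ) := honeT a ha
      have hbv : (1 : ℝ) ≤ (b : ℝ) := honeT b hb
      have hfa : 1 ≤ ⌊(a : ℝ)⌋₊ := Nat.le_floor (by exact_mod_cast hav)
      have hfb : 1 ≤ ⌊(b : ℝ)⌋₊ := Nat.le_floor (by exact_mod_cast hbv)
      have h2a : (2 : ℕ) ^ Nat.log 2 ⌊(a : ℝ)⌋₊ ≤ ⌊(a : ℝ)⌋₊ :=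
        Nat.pow_log_le_self 2 (by omega)
      have h2b : (2 : ℕ) ^ Nat.log 2 ⌊(b : ℝ)⌋₊ ≤ ⌊(b : ℝ)⌋₊ :=
        Nat.pow_log_le_self 2 (by omega)
      have hkey : (2 : ℕ) ^ (Nat.log 2 ⌊(a : ℝ)⌋₊ + Nat.log 2 ⌊(b : ℝ)⌋₊) ≤ ⌊((a * b : T) : ℝ)⌋₊ := by
        apply Nat.le_floor
        have hfa' : ((⌊(a : ℝ)⌋₊ : ℝ)) ≤ (a : ℝ) := Nat.floor_le (by linarith)
        have hfb' : ((⌊(b : ℝ)⌋₊ : ℝ)) ≤ (b : ℝ) := Nat.floor_le (by linarith)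
        have hmul : ((a * b : T) : ℝ) = (a : ℝ) * (b : ℝ) := rfl
        rw [hmul, pow_add]
        push_cast
        have h2a' : ((2 : ℝ)) ^ Nat.log 2 ⌊(a : ℝ)⌋₊ ≤ (a : ℝ) := by
          calc ((2 : ℝ)) ^ Nat.log 2 ⌊(a : ℝ)⌋₊ ≤ (⌊(a : ℝ)⌋₊ : ℝ) := by exact_mod_cast h2a
            _ ≤ (a : ℝ) := hfa'
        have h2b' : ((2 : ℝ)) ^ Nat.log 2 ⌊(b : ℝ)⌋₊ ≤ (b : ℝ) := by
          calc ((2 : ℝ)) ^ Nat.log 2 ⌊(b : ℝ)⌋₊ ≤ (⌊(b : ℝ)⌋₊ : ℝ) := by exact_mod_cast h2b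
            _ ≤ (b : ℝ) := hfb'
        have hp : (0 : ℝ) < (2 : ℝ) ^ Nat.log 2 ⌊(a : ℝ)⌋₊ := by positivity
        nlinarith
      exact Nat.le_log_of_pow_le one_lt_two hkey
  · -- ¬ IsFFS
    intro hFF
    have haS : ((k : ℝ) + 1) * ((k : ℝ) + 1) ∈ T :=
      (hmemT _).mpr (Or.inr (by nlinarith))
    have ha0 : (⟨((k : ℝ) + 1) * ((k : ℝ) + 1), haS⟩ : T) ≠ 0 := by
      intro h
      have := congrArg (fun x : T => (x : ℝ)) h
      simp only at this
      rw [ZeroMemClass.coe_zero] at this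
      nlinarith [this]
    obtain ⟨F, hF⟩ := hFF _ ha0
    have hmemb : ∀ n : ℕ, (k : ℝ) + 1 + 1 / ((n : ℝ) + 2) ∈ T := by
      intro n
      have ht : (0 : ℝ) < 1 / ((n : ℝ) + 2) := by positivity
      exact (hmemT _).mpr (Or.inr (by linarith))
    set f : ℕ → T := fun n => ⟨(k : ℝ) + 1 + 1 / ((n : ℝ) + 2), hmemb n⟩ with hf
    have hinj : Function.Injective f := by
      intro m n h
      have h' : (k : ℝ) + 1 + 1 / ((m : ℝ) + 2) = (k : ℝ) + 1 + 1 / ((n : ℝ) + 2) :=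
        congrArg Subtype.val h
      have hm2 : ((m : ℝ) + 2) ≠ 0 := by positivity
      have hn2 : ((n : ℝ) + 2) ≠ 0 := by positivity
      have : (m : ℝ) = (n : ℝ) := by field_simp at h'; linarith
      exact_mod_cast this
    obtain ⟨b, hbr, hbF⟩ := (Set.infinite_range_of_injective hinj).exists_notMem_finset F
    obtain ⟨n, rfl⟩ := hbr
    -- f n divides a
    have ht0 : (0 : ℝ) < 1 / ((n : ℝ) + 2) := by positivity
    have ht1 : 1 / ((n : ℝ) + 2) ≤ 1 / 2 := by
      apply one_div_le_one_div_of_le <;> [norm_num; (push_cast; linarith [Nat.cast_nonneg (α := ℝ) n])]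
    have hbpos : (0 : ℝ) < (k : ℝ) + 1 + 1 / ((n : ℝ) + 2) := by linarith
    have hcS : ((k : ℝ) + 1) * ((k : ℝ) + 1) / ((k : ℝ) + 1 + 1 / ((n : ℝ) + 2)) ∈ T := by
      apply (hmemT _).mpr
      refine Or.inr ?_
      rw [le_div_iff₀ hbpos]
      nlinarith
    have hdvd : f n ∣ (⟨((k : ℝ) + 1) * ((k : ℝ) + 1), haS⟩ : T) := by
      refine ⟨⟨_, hcS⟩, ?_⟩
      apply Subtype.ext
      show ((k : ℝ) + 1) * ((k : ℝ) + 1) =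
        ((k : ℝ) + 1 + 1 / ((n : ℝ) + 2)) * (((k : ℝ) + 1) * ((k : ℝ) + 1) / ((k : ℝ) + 1 + 1 / ((n : ℝ) + 2)))
      field_simp
    obtain ⟨c, hcF, hbc⟩ := hF (f n) hdvd
    obtain ⟨u, hu⟩ := hbc
    have hfc : f n = c := by
      have h1 := congrArg (fun x : T => (x : ℝ)) hu
      push_cast at h1
      rw [hunit u, mul_one] at h1
      exact Subtype.ext h1
    rw [hfc] at hbF
    exact hbF hcF
end

section
/- In the polynomial semidomain ℕ₀[x], the polynomials x+1, x²+x+1, x³+1, and x⁴+x²+1 are irreducible, and consequently x⁵+x⁴+x³+x²+x+1 = (x+1)(x⁴+x²+1) = (x²+x+1)(x³+1) has two distinct factorizations into irreducibles; hence ℕ₀[x] is not a unique factorization semidomain. -/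
/-!
Evaluation at `1` is a semiring map `ℕ[X] → ℕ` sending a polynomial to the sum of its
coefficients, and it takes the values `2, 3, 2, 3` on the four polynomials. So in any
factorization one factor has coefficient sum `1`; since the constant term is nonzero, that factor
has constant term `1` and no other coefficient, i.e. it is `1`. As `1` is the only unit of
`ℕ[X]`, associated multisets of polynomials are equal, and the two factorizations of the sextic
differ.
-/

open Polynomial

/-- A commutative monoid with zero is a unique factorization monoid if it is atomic and
factorizations into irreducibles are unique up to order and associates. -/
def IsUFS (M : Type) [CommMonoidWithZero M] : Prop :=
  Atomic M ∧ ∀ l m : Multiset M, (∀ b ∈ l, Irreducible b) → (∀ b ∈ m, Irreducible b) →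
    Associated l.prod m.prod → Multiset.Rel Associated l m

namespace Polynomial

instance subsingleton_units {R : Type*} [Semiring R] [NoZeroDivisors R] [Subsingleton Rˣ] :
    Subsingleton R[X]ˣ where
  allEq u v := by
    have (w : R[X]ˣ) : (w : R[X]) = 1 := by
      obtain ⟨r, hr, hrw⟩ := isUnit_iff.mp w.isUnit
      rw [← hrw, isUnit_iff_eq_one.mp hr, C_1]
    exact Units.ext ((this u).trans (this v).symm)

theorem eq_one_of_eval_one_eq_one_of_coeff_zero_ne_zero {a : ℕ[X]} (h1 : a.eval 1 = 1)
    (h0 : a.coeff 0 ≠ 0) : a = 1 := by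
  have hdeg : a.natDegree = 0 := by
    by_contra hn
    have hlead : a.coeff a.natDegree ≠ 0 :=
      mt leadingCoeff_eq_zero.mp (by rintro rfl; exact h0 rfl)
    have hsum := Finset.add_le_sum (s := Finset.range (a.natDegree + 1)) (f := a.coeff)
      (fun _ _ => Nat.zero_le _) (by simp) (by simp) (Ne.symm hn)
    simp only [eval_eq_sum_range, one_pow, mul_one] at h1
    omega
  rw [eq_C_of_natDegree_eq_zero hdeg] at h1 ⊢
  rw [eval_C] at h1
  rw [h1, C_1]

theorem irreducible_of_prime_eval_one {f : ℕ[X]} (hp : (f.eval 1).Prime) (h0 : f.coeff 0 ≠ 0) :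
    Irreducible f where
  not_isUnit hu := by
    rw [isUnit_iff_eq_one.mp hu, eval_one] at hp
    exact Nat.not_prime_one hp
  isUnit_or_isUnit a b hab := by
    subst hab
    rw [mul_coeff_zero] at h0
    rw [eval_mul, Nat.prime_mul_iff] at hp
    rcases hp with ⟨-, hb⟩ | ⟨-, ha⟩
    · exact .inr (isUnit_iff_eq_one.mpr
        (eq_one_of_eval_one_eq_one_of_coeff_zero_ne_zero hb (right_ne_zero_of_mul h0)))
    · exact .inl (isUnit_iff_eq_one.mpr
        (eq_one_of_eval_one_eq_one_of_coeff_zero_ne_zero ha (left_ne_zero_of_mul h0)))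

end Polynomial

/-- In `ℕ₀[x]`, the polynomials `x+1`, `x²+x+1`, `x³+1`, and `x⁴+x²+1` are irreducible, and
`x⁵+x⁴+x³+x²+x+1 = (x+1)(x⁴+x²+1) = (x²+x+1)(x³+1)` gives two distinct factorizations into
irreducibles; hence `ℕ₀[x]` is not a unique factorization semidomain. -/
theorem stmt16 :
    Irreducible (X + 1 : Polynomial ℕ) ∧
    Irreducible (X ^ 2 + X + 1 : Polynomial ℕ) ∧
    Irreducible (X ^ 3 + 1 : Polynomial ℕ) ∧
    Irreducible (X ^ 4 + X ^ 2 + 1 : Polynomial ℕ) ∧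
    (X + 1) * (X ^ 4 + X ^ 2 + 1) =
      (X ^ 5 + X ^ 4 + X ^ 3 + X ^ 2 + X + 1 : Polynomial ℕ) ∧
    (X ^ 2 + X + 1) * (X ^ 3 + 1) =
      (X ^ 5 + X ^ 4 + X ^ 3 + X ^ 2 + X + 1 : Polynomial ℕ) ∧
    ¬ Multiset.Rel Associated ({X + 1, X ^ 4 + X ^ 2 + 1} : Multiset (Polynomial ℕ))
        ({X ^ 2 + X + 1, X ^ 3 + 1} : Multiset (Polynomial ℕ)) ∧
    ¬ IsUFS (Polynomial ℕ) := by
  have h1 : Irreducible (X + 1 : ℕ[X]) := irreducible_of_prime_eval_one (by norm_num) (by simp)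
  have h2 : Irreducible (X ^ 2 + X + 1 : ℕ[X]) :=
    irreducible_of_prime_eval_one (by norm_num) (by simp)
  have h3 : Irreducible (X ^ 3 + 1 : ℕ[X]) := irreducible_of_prime_eval_one (by norm_num) (by simp)
  have h4 : Irreducible (X ^ 4 + X ^ 2 + 1 : ℕ[X]) :=
    irreducible_of_prime_eval_one (by norm_num) (by simp)
  have e1 : (X + 1) * (X ^ 4 + X ^ 2 + 1) =
      (X ^ 5 + X ^ 4 + X ^ 3 + X ^ 2 + X + 1 : ℕ[X]) := by ring
  have e2 : (X ^ 2 + X + 1) * (X ^ 3 + 1) =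
      (X ^ 5 + X ^ 4 + X ^ 3 + X ^ 2 + X + 1 : ℕ[X]) := by ring
  have distinct : ¬ Multiset.Rel Associated ({X + 1, X ^ 4 + X ^ 2 + 1} : Multiset ℕ[X])
      {X ^ 2 + X + 1, X ^ 3 + 1} := by
    intro h
    -- the values at `2` are `{3, 21}` and `{7, 9}`
    have := congrArg (fun s => (s.map (eval 2)).sum)
      (Multiset.rel_eq.mp (h.mono fun _ _ _ _ => associated_iff_eq.mp))
    norm_num at this
  refine ⟨h1, h2, h3, h4, e1, e2, distinct, fun ⟨_, unique⟩ => distinct (unique _ _ ?_ ?_ ?_)⟩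
  · simp [h1, h4]
  · simp [h2, h3]
  · simp [e1, e2]
end

section
/- Let S be a semidomain that is not an integral domain (i.e., (S,+) is not a group). Then the polynomials x+1, x²+x+1, x³+1, and x⁴+x²+1 are irreducible in S[x]. -/
open Polynomial

/-!
Since `(S, +)` is not a group, `-1 ∉ S`; hence no unit of `S` has an additive inverse in `S`.
All four polynomials are monic, so only monic factorizations need to be ruled out. A monic
linear factor of `X ^ 3 + 1` or of `X ^ 4 + X ^ 2 + 1` would write the coefficient `0` of `X` as
a unit plus an element of `S`. A factorization `(X + u) (X + v)` of `X ^ 2 + X + 1` gives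
`u + v = 1` and `u v = 1`, so `u ^ 2 + 1 = u` and `u ^ 3 = -1`. Finally, if
`(X ^ 2 + b X + c) (X ^ 2 + e X + k) = X ^ 4 + X ^ 2 + 1`, then `e = -b` and `b (c - k) = 0`:
either `b = e = 0`, which is the quadratic case again, or `c = k`, so `c ^ 2 = 1` forces
`c = k = 1` and then `b e = -1`.
-/

namespace IsSemidomain

variable {S : Type} [CommSemiring S]

theorem isRightCancelAdd (hS : IsSemidomain S) : IsRightCancelAdd S := by
  obtain ⟨⟨_, f, inj⟩⟩ := hS
  exact ⟨fun a _ _ h =>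
    inj <| add_right_cancel (b := f a) (by simpa only [map_add] using congrArg f h)⟩

end IsSemidomain

theorem Polynomial.irreducible_X_add_one {S : Type} [CommSemiring S] [IsDomain S] :
    Irreducible (X + 1 : S[X]) := by
  have hdeg : (X + 1 : S[X]).natDegree = 1 := by compute_degree!
  rw [(by monicity! : (X + 1 : S[X]).Monic).irreducible_iff_natDegree', hdeg]
  exact ⟨fun h => by simp [h] at hdeg, fun _ _ _ _ _ hg => by simp at hg⟩

section NoNegOne

variable {S : Type} [CommSemiring S]

theorem one_add_ne_zero_of_not_forall_exists_add_eq_zero (h : ¬ ∀ a : S, ∃ b : S, a + b = 0)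
    (s : S) : 1 + s ≠ 0 :=
  fun hs => h fun a => ⟨a * s, by rw [← mul_one_add, hs, mul_zero]⟩

variable (hneg : ∀ s : S, 1 + s ≠ 0)
include hneg

theorem add_ne_zero_of_isUnit_left {u : S} (hu : IsUnit u) (v : S) : u + v ≠ 0 := by
  obtain ⟨w, rfl⟩ := hu
  intro h
  apply hneg (v * ↑w⁻¹)
  calc 1 + v * ↑w⁻¹ = (↑w + v) * ↑w⁻¹ := by rw [add_mul, Units.mul_inv]
    _ = 0 := by rw [h, zero_mul]

theorem false_of_add_eq_one_of_mul_eq_one [IsRightCancelAdd S] {u v : S} (hsum : u + v = 1)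
    (hprod : u * v = 1) : False := by
  have hsq : u ^ 2 + 1 = u := by rw [← hprod, sq, ← mul_add, hsum, mul_one]
  apply hneg (u ^ 3)
  apply add_right_cancel (b := u)
  calc 1 + u ^ 3 + u = u * (u ^ 2 + 1) + 1 := by ring
    _ = u := by rw [hsq, ← sq, hsq]
    _ = 0 + u := (zero_add u).symm

theorem eq_one_of_sq_eq_one [IsRightCancelAdd S] [IsLeftCancelMulZero S] {w : S}
    (hw : w ^ 2 = 1) : w = 1 := by
  have h : (1 + w) * (w + 1) = (1 + w) * (1 + 1) := by linear_combination hw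
  exact add_right_cancel (mul_left_cancel₀ (hneg w) h)

namespace Polynomial

theorem coeff_one_mul_ne_zero {f g : S[X]} (hg : g.Monic) (hg1 : g.natDegree = 1)
    (h0 : IsUnit ((f * g).coeff 0)) : (f * g).coeff 1 ≠ 0 := by
  have hg1 : g.coeff 1 = 1 := hg1 ▸ hg.coeff_natDegree
  rw [mul_coeff_zero] at h0
  simpa [coeff_mul, Finset.Nat.antidiagonal_succ, hg1] using
    add_ne_zero_of_isUnit_left hneg (isUnit_of_mul_isUnit_left h0) (f.coeff 1 * g.coeff 0)

theorem mul_ne_X_pow_four_add_X_sq_add_one [IsDomain S] [IsRightCancelAdd S] {f g : S[X]}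
    (hf : f.Monic) (hg : g.Monic) (hf2 : f.natDegree = 2) (hg2 : g.natDegree = 2) :
    f * g ≠ X ^ 4 + X ^ 2 + 1 := by
  intro h
  have hf2 : f.coeff 2 = 1 := hf2 ▸ hf.coeff_natDegree
  have hg2 : g.coeff 2 = 1 := hg2 ▸ hg.coeff_natDegree
  have hf3 : f.coeff 3 = 0 := coeff_eq_zero_of_natDegree_lt (by omega)
  have hg3 : g.coeff 3 = 0 := coeff_eq_zero_of_natDegree_lt (by omega)
  have e3 : f.coeff 1 + g.coeff 1 = 0 := by
    simpa [coeff_mul, Finset.Nat.antidiagonal_succ, coeff_one, hf2, hf3, hg2, hg3] using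
      congrArg (coeff · 3) h
  have e2 : f.coeff 0 + f.coeff 1 * g.coeff 1 + g.coeff 0 = 1 := by
    simpa [coeff_mul, Finset.Nat.antidiagonal_succ, coeff_one, add_assoc, hf2, hg2] using
      congrArg (coeff · 2) h
  have e1 : f.coeff 0 * g.coeff 1 + f.coeff 1 * g.coeff 0 = 0 := by
    simpa [coeff_mul, Finset.Nat.antidiagonal_succ, coeff_one] using congrArg (coeff · 1) h
  have e0 : f.coeff 0 * g.coeff 0 = 1 := by
    simpa using congrArg (coeff · 0) h
  generalize f.coeff 1 = b, f.coeff 0 = c, g.coeff 1 = e, g.coeff 0 = k at e3 e2 e1 e0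
  rcases eq_or_ne b 0 with rfl | hb
  · rw [zero_add] at e3
    exact false_of_add_eq_one_of_mul_eq_one hneg (by simpa [e3] using e2) e0
  have hck : c = k := by
    refine mul_left_cancel₀ hb (add_right_cancel (b := c * e) ?_)
    calc b * c + c * e = (b + e) * c := by ring
      _ = b * k + c * e := by rw [e3, zero_mul, ← e1, add_comm]
  have hc : c = 1 := eq_one_of_sq_eq_one hneg (by rw [sq]; rwa [← hck] at e0)
  apply hneg (b * e)
  apply add_right_cancel (b := 1)
  calc 1 + b * e + 1 = c + b * e + k := by rw [← hck, hc]
    _ = 0 + 1 := by rw [e2, zero_add]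

theorem irreducible_X_sq_add_X_add_one [IsDomain S] [IsRightCancelAdd S] :
    Irreducible (X ^ 2 + X + 1 : S[X]) := by
  have hdeg : (X ^ 2 + X + 1 : S[X]).natDegree = 2 := by compute_degree!
  by_contra hirr
  obtain ⟨u, v, h0, h1⟩ :=
    ((by monicity! : (X ^ 2 + X + 1 : S[X]).Monic).not_irreducible_iff_exists_add_mul_eq_coeff
      hdeg).1 hirr
  exact false_of_add_eq_one_of_mul_eq_one hneg (by simpa [coeff_X, coeff_one] using h1.symm)
    (by simpa using h0.symm)

theorem irreducible_X_pow_three_add_one [IsDomain S] : Irreducible (X ^ 3 + 1 : S[X]) := by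
  have hdeg : (X ^ 3 + 1 : S[X]).natDegree = 3 := by compute_degree!
  rw [(by monicity! : (X ^ 3 + 1 : S[X]).Monic).irreducible_iff_natDegree', hdeg]
  refine ⟨fun h => by simp [h] at hdeg, fun f g _ hg hfg hdg => ?_⟩
  have hg1 : g.natDegree = 1 := by simp at hdg; omega
  exact coeff_one_mul_ne_zero hneg (f := f) hg hg1 (by simp [hfg]) (by simp [hfg, coeff_one])

theorem irreducible_X_pow_four_add_X_sq_add_one [IsDomain S] [IsRightCancelAdd S] :
    Irreducible (X ^ 4 + X ^ 2 + 1 : S[X]) := by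
  have hdeg : (X ^ 4 + X ^ 2 + 1 : S[X]).natDegree = 4 := by compute_degree!
  rw [(by monicity! : (X ^ 4 + X ^ 2 + 1 : S[X]).Monic).irreducible_iff_natDegree', hdeg]
  refine ⟨fun h => by simp [h] at hdeg, fun f g hf hg hfg hdg => ?_⟩
  simp only [Finset.mem_Ioc] at hdg
  obtain hg1 | hg2 : g.natDegree = 1 ∨ g.natDegree = 2 := by omega
  · exact coeff_one_mul_ne_zero hneg (f := f) hg hg1 (by simp [hfg]) (by simp [hfg, coeff_one])
  · have hf2 : f.natDegree = 2 := by
      have := congrArg natDegree hfg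
      rw [hf.natDegree_mul hg, hdeg] at this
      omega
    exact mul_ne_X_pow_four_add_X_sq_add_one hneg hf hg hf2 hg2 hfg

end Polynomial

end NoNegOne

/-- Let `S` be a semidomain that is not an integral domain, i.e. `(S,+)` is not a group. Then
the polynomials `x+1`, `x²+x+1`, `x³+1`, and `x⁴+x²+1` are irreducible in `S[x]`. -/
theorem stmt17 (S : Type) [CommSemiring S] (hS : IsSemidomain S)
    (hnd : ¬ ∀ a : S, ∃ b : S, a + b = 0) :
    Irreducible (X + 1 : Polynomial S) ∧
    Irreducible (X ^ 2 + X + 1 : Polynomial S) ∧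
    Irreducible (X ^ 3 + 1 : Polynomial S) ∧
    Irreducible (X ^ 4 + X ^ 2 + 1 : Polynomial S) := by
  have := hS.isDomain
  have := hS.isRightCancelAdd
  have hneg := one_add_ne_zero_of_not_forall_exists_add_eq_zero hnd
  exact ⟨irreducible_X_add_one, irreducible_X_sq_add_X_add_one hneg,
    irreducible_X_pow_three_add_one hneg, irreducible_X_pow_four_add_X_sq_add_one hneg⟩
end
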